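/- arXiv:0711.1937 — 6 statements merged into one kernel-verified Lean document; each statement's English description precedes it below -/
import Mathlib

section
/- Let s ≥ 1, m ≥ 0, k ≥ 1. Then Σ_{i=0}^{min(2s+m,k)} Γ_i^{[s,s+m]×k} · 2^{k−i} = 2^{2k+2s+m−2} + 2^{3k−2} − 2^{2k−2}. -/
open Matrix

/-- The `a × k` Hankel (persymmetric) matrix over `F_2` whose `(i,j)` entry is `α (i+j)`. -/
def hankel (a k : ℕ) (α : Fin (a + k - 1) → ZMod 2) :
    Matrix (Fin a) (Fin k) (ZMod 2) :=
  Matrix.of fun i j => α ⟨(i : ℕ) + (j : ℕ), by have := i.isLt; have := j.isLt; omega⟩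

/-- `Γ_i^{[a,b]×k}` : the number of pairs `(α, β)` such that the `(a+b) × k` matrix obtained
by stacking the `a × k` Hankel matrix of `α` on top of the `b × k` Hankel matrix of `β`
has rank `i` over `F_2`. -/
noncomputable def Gamma (a b k i : ℕ) : ℕ :=
  Nat.card {p : (Fin (a + k - 1) → ZMod 2) × (Fin (b + k - 1) → ZMod 2) //
    (Matrix.fromRows (hankel a k p.1) (hankel b k p.2)).rank = i}

/-- The convolution matrix: `convM a k x *ᵥ α = hankel a k α *ᵥ x`. -/
def convM (a k : ℕ) (x : Fin k → ZMod 2) : Matrix (Fin a) (Fin (a + k - 1)) (ZMod 2) :=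
  Matrix.of fun i t => ∑ j : Fin k, if (t : ℕ) = (i : ℕ) + (j : ℕ) then x j else 0

lemma convM_mulVec (a k : ℕ) (x : Fin k → ZMod 2) (α : Fin (a + k - 1) → ZMod 2) :
    (convM a k x).mulVec α = (hankel a k α).mulVec x := by
  funext i
  simp only [Matrix.mulVec, dotProduct, convM, hankel, Matrix.of_apply]
  calc ∑ t : Fin (a+k-1), (∑ j : Fin k, if (t : ℕ) = (i : ℕ) + (j : ℕ) then x j else 0) * α t
      = ∑ t : Fin (a+k-1), ∑ j : Fin k, (if (t : ℕ) = (i : ℕ) + (j : ℕ) then x j * α t else 0) := by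
        refine Finset.sum_congr rfl fun t _ => ?_
        rw [Finset.sum_mul]
        exact Finset.sum_congr rfl fun j _ => by split <;> simp
    _ = ∑ j : Fin k, ∑ t : Fin (a+k-1), (if (t : ℕ) = (i : ℕ) + (j : ℕ) then x j * α t else 0) :=
        Finset.sum_comm
    _ = ∑ j : Fin k, α ⟨(i : ℕ) + (j : ℕ), by have := i.isLt; have := j.isLt; omega⟩ * x j := by
        refine Finset.sum_congr rfl fun j _ => ?_
        have hc : ((i : ℕ) + (j : ℕ)) < a + k - 1 := by have := i.isLt; have := j.isLt; omega
        rw [show (∑ t : Fin (a+k-1), (if (t : ℕ) = (i : ℕ) + (j : ℕ) then x j * α t else 0)) =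
            ∑ t : Fin (a + k - 1), (if t = ⟨(i : ℕ) + (j : ℕ), hc⟩ then x j * α t else 0) from
          Finset.sum_congr rfl fun t _ => by
            congr 1
            simp [Fin.ext_iff]]
        rw [Finset.sum_ite_eq' Finset.univ]
        simp [mul_comm]

lemma convM_rank (a k : ℕ) (ha : 1 ≤ a) (x : Fin k → ZMod 2) (hx : x ≠ 0) :
    (convM a k x).rank = a := by
  classical
  have hinj : Function.Injective (convM a k x)ᵀ.mulVecLin := by
    rw [← LinearMap.ker_eq_bot, LinearMap.ker_eq_bot']
    intro w hw
    by_contra hw0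
    have hxS : (Finset.univ.filter fun j : Fin k => x j ≠ 0).Nonempty := by
      rw [Finset.filter_nonempty_iff]
      by_contra h
      push_neg at h
      exact hx (funext fun j => by simpa using h j (Finset.mem_univ j))
    have hwS : (Finset.univ.filter fun i : Fin a => w i ≠ 0).Nonempty := by
      rw [Finset.filter_nonempty_iff]
      by_contra h
      push_neg at h
      exact hw0 (funext fun i => by simpa using h i (Finset.mem_univ i))
    set j0 := (Finset.univ.filter fun j : Fin k => x j ≠ 0).max' hxS with hj0
    set i0 := (Finset.univ.filter fun i : Fin a => w i ≠ 0).max' hwS with hi0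
    have hxj0 : x j0 ≠ 0 := by
      have := Finset.max'_mem _ hxS
      simpa using this
    have hwi0 : w i0 ≠ 0 := by
      have := Finset.max'_mem _ hwS
      simpa using this
    have hxmax : ∀ j : Fin k, j0 < j → x j = 0 := by
      intro j hj
      by_contra h
      exact absurd (Finset.le_max' _ j (by simpa using h)) (not_le.mpr hj)
    have hwmax : ∀ i : Fin a, i0 < i → w i = 0 := by
      intro i hi
      by_contra h
      exact absurd (Finset.le_max' _ i (by simpa using h)) (not_le.mpr hi)
    have hc : ((i0 : ℕ) + (j0 : ℕ)) < a + k - 1 := by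
      have := i0.isLt; have := j0.isLt; omega
    set t0 : Fin (a + k - 1) := ⟨(i0 : ℕ) + (j0 : ℕ), hc⟩ with ht0
    have h0 : (convM a k x)ᵀ.mulVec w t0 = 0 := by rw [← Matrix.mulVecLin_apply, hw]; rfl
    have h1 : (convM a k x)ᵀ.mulVec w t0 = x j0 * w i0 := by
      simp only [Matrix.mulVec, dotProduct, Matrix.transpose_apply, convM, Matrix.of_apply]
      calc ∑ i : Fin a, (∑ j : Fin k, if (t0 : ℕ) = (i : ℕ) + (j : ℕ) then x j else 0) * w i
          = ∑ i : Fin a, ∑ j : Fin k, (if (t0 : ℕ) = (i : ℕ) + (j : ℕ) then x j * w i else 0) := by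
            refine Finset.sum_congr rfl fun i _ => ?_
            rw [Finset.sum_mul]
            exact Finset.sum_congr rfl fun j _ => by split <;> simp
        _ = x j0 * w i0 := by
            rw [Finset.sum_eq_single i0]
            · rw [Finset.sum_eq_single j0]
              · simp [ht0]
              · intro j _ hj
                have : ¬ ((t0 : ℕ) = (i0 : ℕ) + (j : ℕ)) := by
                  simp only [ht0]
                  intro h
                  exact hj (Fin.ext (by omega))
                simp [this]
              · simp
            · intro i _ hi
              refine Finset.sum_eq_zero fun j _ => ?_
              split
              · rename_i h
                simp only [ht0] at h
                rcases lt_or_gt_of_ne (fun h' : (i:ℕ) = (i0:ℕ) => hi (Fin.ext h')) with hlt | hgt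
                · have : (j0 : ℕ) < (j : ℕ) := by omega
                  rw [hxmax j this, zero_mul]
                · have : (i0 : ℕ) < (i : ℕ) := hgt
                  rw [hwmax i this, mul_zero]
              · rfl
            · simp
    rw [h0] at h1
    exact (mul_ne_zero hxj0 hwi0) h1.symm
  rw [← Matrix.rank_transpose, Matrix.rank, LinearMap.finrank_range_of_inj hinj]
  simp

lemma card_mulVec_ker {R : Type*} {c : ℕ} (M : Matrix R (Fin c) (ZMod 2)) :
    Nat.card {v : Fin c → ZMod 2 // M.mulVec v = 0} = 2 ^ (c - M.rank) := by
  classical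
  have he : {v : Fin c → ZMod 2 // M.mulVec v = 0} ≃ LinearMap.ker M.mulVecLin :=
    Equiv.subtypeEquivRight fun v => by simp [LinearMap.mem_ker]
  rw [Nat.card_congr he]
  letI : Fintype (LinearMap.ker M.mulVecLin) := Fintype.ofFinite _
  rw [Nat.card_eq_fintype_card, Module.card_eq_pow_finrank (K := ZMod 2), ZMod.card]
  congr 1
  have h1 := M.mulVecLin.finrank_range_add_finrank_ker
  have h2 : Module.finrank (ZMod 2) (Fin c → ZMod 2) = c := by simp
  have h3 : M.rank = Module.finrank (ZMod 2) (LinearMap.range M.mulVecLin) := rfl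
  omega

lemma card_hankel_fiber_ne (a k : ℕ) (ha : 1 ≤ a) (x : Fin k → ZMod 2) (hx : x ≠ 0) :
    (Finset.univ.filter fun α : Fin (a + k - 1) → ZMod 2 => (hankel a k α).mulVec x = 0).card
      = 2 ^ (k - 1) := by
  classical
  have hc := card_mulVec_ker (convM a k x)
  rw [convM_rank a k ha x hx] at hc
  calc (Finset.univ.filter fun α : Fin (a + k - 1) → ZMod 2 =>
          (hankel a k α).mulVec x = 0).card
      = Nat.card {α : Fin (a + k - 1) → ZMod 2 // (hankel a k α).mulVec x = 0} := by
        rw [Nat.card_eq_fintype_card, Fintype.card_subtype]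
    _ = Nat.card {α : Fin (a + k - 1) → ZMod 2 // (convM a k x).mulVec α = 0} :=
        (Nat.card_congr (Equiv.subtypeEquivRight fun α => by rw [convM_mulVec])).symm
    _ = 2 ^ (a + k - 1 - a) := hc
    _ = 2 ^ (k - 1) := by congr 1; omega

lemma card_hankel_fiber_zero (a k : ℕ) :
    (Finset.univ.filter fun α : Fin (a + k - 1) → ZMod 2 =>
        (hankel a k α).mulVec (0 : Fin k → ZMod 2) = 0).card = 2 ^ (a + k - 1) := by
  classical
  rw [Finset.filter_true_of_mem fun α _ => Matrix.mulVec_zero _, Finset.card_univ]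
  simp [ZMod.card]

lemma key_count (a b k : ℕ) (ha : 1 ≤ a) (hb : 1 ≤ b) (hk : 1 ≤ k) :
    (∑ i ∈ Finset.range (min (a + b) k + 1), Gamma a b k i * 2 ^ (k - i))
      = 2 ^ (a + k - 1 + (b + k - 1)) + (2 ^ k - 1) * (2 ^ (k - 1) * 2 ^ (k - 1)) := by
  classical
  set P := (Fin (a + k - 1) → ZMod 2) × (Fin (b + k - 1) → ZMod 2) with hP
  have hGamma : ∀ i, Gamma a b k i =
      (Finset.univ.filter fun p : P =>
        (Matrix.fromRows (hankel a k p.1) (hankel b k p.2)).rank = i).card := by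
    intro i
    rw [Gamma, Nat.card_eq_fintype_card, Fintype.card_subtype]
  -- Step A: fiberwise sum
  have hmaps : ∀ p : P, p ∈ Finset.univ →
      (Matrix.fromRows (hankel a k p.1) (hankel b k p.2)).rank ∈
        Finset.range (min (a + b) k + 1) := by
    intro p _
    rw [Finset.mem_range, Nat.lt_succ_iff, le_min_iff]
    constructor
    · have h := (Matrix.fromRows (hankel a k p.1) (hankel b k p.2)).rank_le_card_height
      simpa using h
    · have h := (Matrix.fromRows (hankel a k p.1) (hankel b k p.2)).rank_le_card_width
      simpa using h
  have stepA : (∑ i ∈ Finset.range (min (a + b) k + 1), Gamma a b k i * 2 ^ (k - i))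
      = ∑ p : P, 2 ^ (k - (Matrix.fromRows (hankel a k p.1) (hankel b k p.2)).rank) := by
    rw [← Finset.sum_fiberwise_of_maps_to hmaps
      (fun p : P => 2 ^ (k - (Matrix.fromRows (hankel a k p.1) (hankel b k p.2)).rank))]
    refine Finset.sum_congr rfl fun i _ => ?_
    rw [hGamma i]
    calc (Finset.univ.filter fun p : P =>
            (Matrix.fromRows (hankel a k p.1) (hankel b k p.2)).rank = i).card * 2 ^ (k - i)
        = ∑ _p ∈ Finset.univ.filter fun p : P =>
            (Matrix.fromRows (hankel a k p.1) (hankel b k p.2)).rank = i, 2 ^ (k - i) := by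
          rw [Finset.sum_const, smul_eq_mul]
      _ = _ := Finset.sum_congr rfl fun p hp => by rw [(Finset.mem_filter.mp hp).2]
  -- Step B: kernel cardinality
  have stepB : ∀ p : P,
      (2 : ℕ) ^ (k - (Matrix.fromRows (hankel a k p.1) (hankel b k p.2)).rank)
      = (Finset.univ.filter fun x : Fin k → ZMod 2 =>
          (Matrix.fromRows (hankel a k p.1) (hankel b k p.2)).mulVec x = 0).card := by
    intro p
    rw [← card_mulVec_ker (Matrix.fromRows (hankel a k p.1) (hankel b k p.2)),
      Nat.card_eq_fintype_card, Fintype.card_subtype]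
  -- Step C: double counting
  have stepC : (∑ p : P, (Finset.univ.filter fun x : Fin k → ZMod 2 =>
          (Matrix.fromRows (hankel a k p.1) (hankel b k p.2)).mulVec x = 0).card)
      = ∑ x : Fin k → ZMod 2, (Finset.univ.filter fun p : P =>
          (Matrix.fromRows (hankel a k p.1) (hankel b k p.2)).mulVec x = 0).card := by
    simp only [Finset.card_filter]
    exact Finset.sum_comm
  -- Step D: split the pair condition
  have hcond : ∀ (x : Fin k → ZMod 2) (p : P),
      ((Matrix.fromRows (hankel a k p.1) (hankel b k p.2)).mulVec x = 0) ↔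
      ((hankel a k p.1).mulVec x = 0 ∧ (hankel b k p.2).mulVec x = 0) := by
    intro x p
    rw [Matrix.fromRows_mulVec]
    constructor
    · intro h
      exact ⟨funext fun i => congrFun h (Sum.inl i), funext fun i => congrFun h (Sum.inr i)⟩
    · rintro ⟨h1, h2⟩
      funext i
      cases i with
      | inl i => exact congrFun h1 i
      | inr i => exact congrFun h2 i
  have stepD : ∀ x : Fin k → ZMod 2,
      (Finset.univ.filter fun p : P =>
          (Matrix.fromRows (hankel a k p.1) (hankel b k p.2)).mulVec x = 0).card
      = (Finset.univ.filter fun α : Fin (a + k - 1) → ZMod 2 =>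
            (hankel a k α).mulVec x = 0).card *
        (Finset.univ.filter fun β : Fin (b + k - 1) → ZMod 2 =>
            (hankel b k β).mulVec x = 0).card := by
    intro x
    rw [Finset.filter_congr fun p _ => by
      simpa using (hcond x p)]
    rw [show (Finset.univ : Finset P) = Finset.univ ×ˢ Finset.univ from
      (Finset.univ_product_univ).symm]
    rw [Finset.filter_product (fun α : Fin (a + k - 1) → ZMod 2 => (hankel a k α).mulVec x = 0)
      (fun β : Fin (b + k - 1) → ZMod 2 => (hankel b k β).mulVec x = 0), Finset.card_product]
  rw [stepA]
  rw [Finset.sum_congr rfl fun p _ => stepB p, stepC,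
    Finset.sum_congr rfl fun x _ => stepD x]
  -- Step E: evaluate the sum over x
  rw [← Finset.add_sum_erase _ _ (Finset.mem_univ (0 : Fin k → ZMod 2))]
  congr 1
  · rw [card_hankel_fiber_zero a k, card_hankel_fiber_zero b k, ← pow_add]
  · have hterm : ∀ x ∈ (Finset.univ : Finset (Fin k → ZMod 2)).erase 0,
        (Finset.univ.filter fun α : Fin (a + k - 1) → ZMod 2 =>
            (hankel a k α).mulVec x = 0).card *
        (Finset.univ.filter fun β : Fin (b + k - 1) → ZMod 2 =>
            (hankel b k β).mulVec x = 0).card = 2 ^ (k - 1) * 2 ^ (k - 1) := by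
      intro x hxmem
      have hx : x ≠ 0 := Finset.ne_of_mem_erase hxmem
      rw [card_hankel_fiber_ne a k ha x hx, card_hankel_fiber_ne b k hb x hx]
    rw [Finset.sum_congr rfl hterm, Finset.sum_const, smul_eq_mul,
      Finset.card_erase_of_mem (Finset.mem_univ _), Finset.card_univ]
    congr 2
    simp [ZMod.card]

theorem sum_Gamma_mul_two_pow (s m k : ℕ) (hs : 1 ≤ s) (hk : 1 ≤ k) :
    (∑ i ∈ Finset.range (min (2 * s + m) k + 1), (Gamma s (s + m) k i : ℤ) * 2 ^ (k - i)) =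
      2 ^ (2 * k + 2 * s + m - 2) + 2 ^ (3 * k - 2) - 2 ^ (2 * k - 2) := by
  have hb : 1 ≤ s + m := by omega
  have key := key_count s (s + m) k hs hb hk
  rw [show s + (s + m) = 2 * s + m from by omega] at key
  have hcast : (∑ i ∈ Finset.range (min (2 * s + m) k + 1),
      (Gamma s (s + m) k i : ℤ) * 2 ^ (k - i))
      = ((∑ i ∈ Finset.range (min (2 * s + m) k + 1),
          Gamma s (s + m) k i * 2 ^ (k - i) : ℕ) : ℤ) := by
    push_cast
    rfl
  rw [hcast, key]
  have h1 : (1 : ℕ) ≤ 2 ^ k := Nat.one_le_two_pow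
  push_cast [h1]
  have e1 : s + k - 1 + (s + m + k - 1) = 2 * k + 2 * s + m - 2 := by omega
  have e2 : (k - 1) + (k - 1) = 2 * k - 2 := by omega
  have e3 : k + (2 * k - 2) = 3 * k - 2 := by omega
  rw [e1, ← pow_add, e2, sub_mul, one_mul, ← pow_add, e3]
  ring
end

section
/- Let s ≥ 2, m ≥ 0, k ≥ 2 and 0 ≤ i ≤ min(2s+m−3, k−2). Then there is no pair (α,β) ∈ F_2^{s+k−1} × F_2^{s+m+k−1} such that simultaneously: rank M(s−1, s+m−1, k−1) = rank M(s, s+m−1, k−1) = rank M(s, s+m, k−1) = i and rank M(s−1, s+m−1, k) = rank M(s, s+m−1, k) = rank M(s, s+m, k) = i+1. -/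
/-!
Let `W ⊆ F₂^k` be the row space of `M(s-1, s+m-1, k)`. Equal ranks make `W` also the row space of
`M(s, s+m, k)`. Dropping the first entry of a Hankel row gives the next row with its last entry
dropped, so `tail W ⊆ init W`. The rank drop from `k` to `k-1` columns puts the last unit vector
`e` in `W`. These two properties pass from `W` to `init W` (with `tail e` as the new last unit
vector), so induction on `k` gives `W = F₂^k`, contradicting `rank W = i + 1 < k`.
-/

open Matrix

/-- The submatrix `M(a', b', k')` of the double persymmetric matrix `D(α, β)`:
its rows are the first `a'` rows of the `α`-Hankel block and the first `b'` rows of the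
`β`-Hankel block, and it keeps the first `k'` columns. -/
def subMat (s m k a' b' k' : ℕ) (α : Fin (s + k - 1) → ZMod 2)
    (β : Fin (s + m + k - 1) → ZMod 2) :
    Matrix (Fin a' ⊕ Fin b') (Fin k') (ZMod 2) :=
  Matrix.of fun r j =>
    Sum.elim
      (fun i : Fin a' =>
        if h : (i : ℕ) + (j : ℕ) < s + k - 1 then α ⟨(i : ℕ) + (j : ℕ), h⟩ else 0)
      (fun i : Fin b' =>
        if h : (i : ℕ) + (j : ℕ) < s + m + k - 1 then β ⟨(i : ℕ) + (j : ℕ), h⟩ else 0) r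

/-- The rank over `F_2` of the submatrix `M(a', b', k')`. -/
noncomputable def subRank (s m k a' b' k' : ℕ) (α : Fin (s + k - 1) → ZMod 2)
    (β : Fin (s + m + k - 1) → ZMod 2) : ℕ :=
  (subMat s m k a' b' k' α β).rank

open Module Submodule LinearMap

namespace Submodule

-- `funLeft R R Fin.castSucc` is `Fin.init` and `funLeft R R Fin.succ` is `Fin.tail`, as linear maps.

variable {R K : Type*} [Ring R] [DivisionRing K] {n : ℕ}

theorem eq_smul_single_last_of_init_eq_zero {x : Fin (n + 1) → R}
    (hx : funLeft R R Fin.castSucc x = 0) : x = x (Fin.last n) • Pi.single (Fin.last n) 1 := by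
  ext j
  induction j using Fin.lastCases with
  | last => simp
  | cast i => simpa [Fin.castSucc_ne_last] using congrFun hx i

theorem eq_top_of_single_last_mem {W : Submodule R (Fin (n + 1) → R)}
    (hshift : W.map (funLeft R R Fin.succ) ≤ W.map (funLeft R R Fin.castSucc))
    (hlast : Pi.single (Fin.last n) 1 ∈ W) : W = ⊤ := by
  induction n with
  | zero =>
    refine eq_top_iff.mpr fun v _ => ?_
    rw [show v = v (Fin.last 0) • Pi.single (Fin.last 0) 1 by ext j; fin_cases j; simp]
    exact W.smul_mem _ hlast
  | succ n ih =>
    have hcomm : (funLeft R R Fin.castSucc).comp (funLeft R R Fin.succ) =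
        (funLeft R R Fin.succ).comp (funLeft R R (Fin.castSucc (n := n + 1))) := by
      ext v j
      simp only [coe_comp, Function.comp_apply, funLeft_apply, Fin.succ_castSucc]
    have hinit : W.map (funLeft R R Fin.castSucc) = ⊤ := by
      refine ih ?_ ?_
      · rw [← map_comp, ← hcomm, map_comp]
        exact map_mono hshift
      · refine hshift ⟨_, hlast, ?_⟩
        ext j
        simp [funLeft_apply, Pi.single_apply, ← Fin.succ_last]
    refine eq_top_iff.mpr fun v _ => ?_
    obtain ⟨w, hwW, hwv⟩ : funLeft R R Fin.castSucc v ∈ W.map (funLeft R R Fin.castSucc) :=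
      hinit ▸ mem_top
    have hvw := eq_smul_single_last_of_init_eq_zero (x := v - w) (by simp [hwv])
    rw [← sub_add_cancel v w, hvw]
    exact W.add_mem (W.smul_mem _ hlast) hwW

theorem single_last_mem_of_finrank_map_init_lt {W : Submodule K (Fin (n + 1) → K)}
    (h : finrank K (W.map (funLeft K K Fin.castSucc)) < finrank K W) :
    Pi.single (Fin.last n) 1 ∈ W := by
  set f := (funLeft K K (Fin.castSucc (n := n))).domRestrict W
  have hrank := f.finrank_range_add_finrank_ker
  rw [range_domRestrict] at hrank
  obtain ⟨⟨⟨x, hxW⟩, hxker⟩, hx0⟩ :=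
    (finrank_pos_iff_exists_ne_zero (R := K) (M := ker f)).mp (by omega)
  obtain ⟨c, rfl⟩ : ∃ c : K, x = c • Pi.single (Fin.last n) 1 :=
    ⟨_, eq_smul_single_last_of_init_eq_zero (by simpa [f] using mem_ker.mp hxker)⟩
  have hc : c ≠ 0 := by
    rintro rfl
    exact hx0 (by simp)
  simpa [smul_smul, hc] using W.smul_mem c⁻¹ hxW

end Submodule

def hankelRow {R : Type*} [Zero R] {N : ℕ} (x : Fin N → R) (c i : ℕ) : Fin c → R :=
  fun j => if h : i + j < N then x ⟨i + j, h⟩ else 0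

section Hankel

variable {R : Type*} [Semiring R] {N N' : ℕ} (x : Fin N → R) (y : Fin N' → R)

def hankelRowSpan (c a b : ℕ) : Submodule R (Fin c → R) :=
  span R (hankelRow x c '' Set.Iio a ∪ hankelRow y c '' Set.Iio b)

theorem hankelRowSpan_mono (c : ℕ) {a a' b b' : ℕ} (ha : a ≤ a') (hb : b ≤ b') :
    hankelRowSpan x y c a b ≤ hankelRowSpan x y c a' b' :=
  span_mono (Set.union_subset_union (Set.image_mono (Set.Iio_subset_Iio ha))
    (Set.image_mono (Set.Iio_subset_Iio hb)))

theorem map_init_hankelRowSpan (n a b : ℕ) :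
    (hankelRowSpan x y (n + 1) a b).map (funLeft R R Fin.castSucc) = hankelRowSpan x y n a b := by
  rw [hankelRowSpan, Submodule.map_span, Set.image_union, Set.image_image, Set.image_image]
  rfl

theorem tail_hankelRow (n i : ℕ) :
    funLeft R R Fin.succ (hankelRow x (n + 1) i) =
      funLeft R R Fin.castSucc (hankelRow x (n + 1) (i + 1)) := by
  ext j
  simp only [funLeft_apply, hankelRow, Fin.val_succ, Fin.val_castSucc, Nat.add_assoc,
    Nat.add_comm 1]

theorem map_tail_hankelRowSpan_le (n : ℕ) {a a' b b' : ℕ} (ha : a + 1 ≤ a') (hb : b + 1 ≤ b') :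
    (hankelRowSpan x y (n + 1) a b).map (funLeft R R Fin.succ) ≤
      (hankelRowSpan x y (n + 1) a' b').map (funLeft R R Fin.castSucc) := by
  rw [hankelRowSpan, Submodule.map_span, span_le]
  rintro _ ⟨_, ⟨i, hi, rfl⟩ | ⟨i, hi, rfl⟩, rfl⟩
  · rw [tail_hankelRow]
    exact mem_map_of_mem (subset_span (Or.inl ⟨i + 1, by simp at hi ⊢; omega, rfl⟩))
  · rw [tail_hankelRow]
    exact mem_map_of_mem (subset_span (Or.inr ⟨i + 1, by simp at hi ⊢; omega, rfl⟩))

end Hankel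

theorem range_row_subMat (s m k a b c : ℕ) (α : Fin (s + k - 1) → ZMod 2)
    (β : Fin (s + m + k - 1) → ZMod 2) :
    Set.range (subMat s m k a b c α β).row =
      hankelRow α c '' Set.Iio a ∪ hankelRow β c '' Set.Iio b := by
  ext v
  constructor
  · rintro ⟨i | i, rfl⟩
    exacts [Or.inl ⟨i, i.2, rfl⟩, Or.inr ⟨i, i.2, rfl⟩]
  · rintro (⟨i, hi, rfl⟩ | ⟨i, hi, rfl⟩)
    exacts [⟨Sum.inl ⟨i, hi⟩, rfl⟩, ⟨Sum.inr ⟨i, hi⟩, rfl⟩]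

theorem subRank_eq_finrank_hankelRowSpan (s m k a b c : ℕ) (α : Fin (s + k - 1) → ZMod 2)
    (β : Fin (s + m + k - 1) → ZMod 2) :
    subRank s m k a b c α β = finrank (ZMod 2) (hankelRowSpan α β c a b) := by
  rw [subRank, rank_eq_finrank_span_row, range_row_subMat, hankelRowSpan]

theorem no_simultaneous_rank_jump (s m k i : ℕ) (hs : 2 ≤ s) (hk : 2 ≤ k)
    (hi : i ≤ min (2 * s + m - 3) (k - 2)) :
    ¬ ∃ (α : Fin (s + k - 1) → ZMod 2) (β : Fin (s + m + k - 1) → ZMod 2),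
      subRank s m k (s - 1) (s + m - 1) (k - 1) α β = i ∧
      subRank s m k s (s + m - 1) (k - 1) α β = i ∧
      subRank s m k s (s + m) (k - 1) α β = i ∧
      subRank s m k (s - 1) (s + m - 1) k α β = i + 1 ∧
      subRank s m k s (s + m - 1) k α β = i + 1 ∧
      subRank s m k s (s + m) k α β = i + 1 := by
  rintro ⟨α, β, hrank_init, -, -, hrank_W, -, hrank_V⟩
  obtain ⟨n, rfl⟩ : ∃ n, k = n + 1 := ⟨k - 1, by omega⟩
  rw [Nat.add_sub_cancel] at hrank_init
  simp only [subRank_eq_finrank_hankelRowSpan] at hrank_init hrank_W hrank_V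
  set W := hankelRowSpan α β (n + 1) (s - 1) (s + m - 1)
  have hWV : W = hankelRowSpan α β (n + 1) s (s + m) := by
    refine eq_of_le_of_finrank_le (hankelRowSpan_mono α β _ ?_ ?_) ?_ <;> omega
  have hshift : W.map (funLeft _ _ Fin.succ) ≤ W.map (funLeft _ _ Fin.castSucc) :=
    calc W.map (funLeft _ _ Fin.succ)
        ≤ (hankelRowSpan α β (n + 1) s (s + m)).map (funLeft _ _ Fin.castSucc) :=
          map_tail_hankelRowSpan_le α β n (by omega) (by omega)
      _ = W.map (funLeft _ _ Fin.castSucc) := by rw [hWV]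
  have hlast : Pi.single (Fin.last n) 1 ∈ W :=
    single_last_mem_of_finrank_map_init_lt (by rw [map_init_hankelRowSpan]; omega)
  have hW : finrank (ZMod 2) W = n + 1 := by
    rw [eq_top_of_single_last_mem hshift hlast, finrank_top, finrank_fin_fun]
  omega
end

section
/- Let s ≥ 2, m ≥ 0, k ≥ 2 and 0 ≤ j ≤ min(2s+m−2, k−1). Then the number of pairs (α,β) ∈ F_2^{s+k−1} × F_2^{s+m+k−1} satisfying rank M(s−1, s+m−1, k−1) = rank M(s−1, s+m−1, k) = j, rank M(s, s+m−1, k−1) = j, rank M(s, s+m−1, k) = j+1, rank M(s, s+m, k−1) = j, rank M(s, s+m, k) = j+1 equals twice the number of pairs (α,β) for which all six of these ranks equal j. -/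
open Matrix

/-!
Flipping the last coordinate of `α` changes `D(α, β)` only in the corner entry `(s, k)` of the
`α`-block, and flipping the last coordinate of `β` only in the corner entry `(s + m, k)` of the
`β`-block. Over `F_2`, if deleting the last column, a row `r₀`, or both from a matrix `A` all
leave submatrices of the same rank `j`, then exactly one of `A` and `A + E_{r₀,last}` has rank `j`
and the other has rank `j + 1`: restriction to the rows other than `r₀` is injective on the span
of the first columns, so exactly one value of the corner entry puts the last column into it.

When the four ranks that do not see the `α`-corner equal `j`, the `α`-flip therefore exchanges
`rank M(s, s+m-1, k) = j + 1` with `rank M(s, s+m-1, k) = j`, and in the first case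
`rank M(s, s+m, k) = j + 1` is forced. When moreover `rank M(s, s+m-1, k) = j`, the `β`-flip
exchanges `rank M(s, s+m, k) = j` with `rank M(s, s+m, k) = j + 1`.
-/

open Module Submodule

instance Submodule.finiteDimensional_span_range {K V ι : Type*} [DivisionRing K]
    [AddCommGroup V] [Module K V] [Finite ι] (v : ι → V) :
    FiniteDimensional K (span K (Set.range v)) :=
  FiniteDimensional.span_of_finite K (Set.finite_range v)

theorem Submodule.existsUnique_add_smul_mem {K V V' : Type*} [Field K] [AddCommGroup V]
    [Module K V] [AddCommGroup V'] [Module K V'] (W : Submodule K V) (π : V →ₗ[K] V') {c e : V}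
    (hW : Disjoint W (LinearMap.ker π)) (hker : LinearMap.ker π = K ∙ e) (he : e ≠ 0)
    (hc : π c ∈ W.map π) : ∃! t : K, c + t • e ∈ W := by
  obtain ⟨w, hw, hwc⟩ := hc
  obtain ⟨μ, hμ⟩ : ∃ μ : K, μ • e = c - w := by
    rw [← mem_span_singleton, ← hker, LinearMap.mem_ker, map_sub, hwc, sub_self]
  refine ⟨-μ, by simpa [neg_smul, hμ] using hw, fun t ht => ?_⟩
  have hmem : (t + μ) • e ∈ W ⊓ LinearMap.ker π := by
    refine ⟨?_, ?_⟩
    · rw [show (t + μ) • e = c + t • e - w by rw [add_smul, hμ]; abel]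
      exact W.sub_mem ht hw
    · rw [hker]
      exact smul_mem _ _ (mem_span_singleton_self e)
  rw [hW.eq_bot, mem_bot, smul_eq_zero] at hmem
  exact eq_neg_of_add_eq_zero_left (hmem.resolve_right he)

theorem LinearMap.ker_funLeft_eq_span_single {K R R' : Type*} [Field K] [DecidableEq R]
    (f : R' → R) (r₀ : R) (hf : Set.range f = {r₀}ᶜ) :
    LinearMap.ker (LinearMap.funLeft K K f) = K ∙ Pi.single r₀ 1 := by
  ext v
  rw [LinearMap.mem_ker, mem_span_singleton]
  constructor
  · intro hv
    refine ⟨v r₀, funext fun r => ?_⟩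
    by_cases hr : r = r₀
    · subst hr
      simp
    · obtain ⟨r', rfl⟩ : r ∈ Set.range f := hf ▸ hr
      simpa [Pi.single_apply, hr] using (congrFun hv r').symm
  · rintro ⟨a, rfl⟩
    funext r'
    have : f r' ≠ r₀ := by simpa [hf] using Set.mem_range_self (f := f) r'
    simp [this]

namespace Matrix

variable {K R R' : Type*} [Field K] {n : ℕ}

theorem span_range_col_eq_sup (A : Matrix R (Fin (n + 1)) K) :
    span K (Set.range A.col) =
      (K ∙ A.col (Fin.last n)) ⊔ span K (Set.range (A.submatrix id Fin.castSucc).col) := by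
  rw [← span_insert]
  congr 1
  ext v
  simp only [Set.mem_range, Fin.exists_fin_succ', Set.mem_insert_iff, or_comm, eq_comm]
  rfl

theorem span_range_col_submatrix_id {ι : Type*} (A : Matrix R ι K) (f : R' → R) :
    span K (Set.range (A.submatrix f id).col) =
      (span K (Set.range A.col)).map (LinearMap.funLeft K K f) := by
  rw [map_span, ← Set.range_comp]
  rfl

theorem rank_le_rank_submatrix_castSucc_add_one (A : Matrix R (Fin (n + 1)) K) :
    A.rank ≤ (A.submatrix id Fin.castSucc).rank + 1 := by
  rw [rank_eq_finrank_span_cols, rank_eq_finrank_span_cols, span_range_col_eq_sup]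
  have hc := finrank_span_le_card (R := K) ({A.col (Fin.last n)} : Set (R → K))
  rw [Set.toFinset_singleton, Finset.card_singleton] at hc
  have := finrank_add_le_finrank_add_finrank (K ∙ A.col (Fin.last n))
    (span K (Set.range (A.submatrix id Fin.castSucc).col))
  omega

theorem rank_eq_rank_submatrix_castSucc_iff (A : Matrix R (Fin (n + 1)) K) :
    A.rank = (A.submatrix id Fin.castSucc).rank ↔
      A.col (Fin.last n) ∈ span K (Set.range (A.submatrix id Fin.castSucc).col) := by
  rw [rank_eq_finrank_span_cols, rank_eq_finrank_span_cols, span_range_col_eq_sup,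
    ← span_singleton_le_iff_mem, ← sup_eq_right]
  exact ⟨fun h => (eq_of_le_of_finrank_eq le_sup_right h.symm).symm, fun h => by rw [h]⟩

theorem existsUnique_rank_add_single_eq [DecidableEq R] (A : Matrix R (Fin (n + 1)) K)
    (f : R' → R) (r₀ : R) (hf : Set.range f = {r₀}ᶜ)
    (h₁ : (A.submatrix f Fin.castSucc).rank = (A.submatrix id Fin.castSucc).rank)
    (h₂ : (A.submatrix f id).rank = (A.submatrix f Fin.castSucc).rank) :
    ∃! t : K, (A + single r₀ (Fin.last n) t).rank = (A.submatrix id Fin.castSucc).rank := by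
  set A' := A.submatrix id Fin.castSucc
  set W := span K (Set.range A'.col)
  set π := LinearMap.funLeft K K f
  have hW : span K (Set.range (A.submatrix f Fin.castSucc).col) = W.map π :=
    span_range_col_submatrix_id A' f
  have key (t : K) : (A + single r₀ (Fin.last n) t).rank = A'.rank ↔
      A.col (Fin.last n) + t • Pi.single r₀ 1 ∈ W := by
    have hA' : (A + single r₀ (Fin.last n) t).submatrix id Fin.castSucc = A' := by
      ext r c
      simp [A', single_apply_of_col_ne _ _ (Fin.castSucc_lt_last c).ne']
    have hc : (A + single r₀ (Fin.last n) t).col (Fin.last n) =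
        A.col (Fin.last n) + t • Pi.single r₀ 1 := by
      ext r
      simp [single_apply, Pi.single_apply, eq_comm]
    rw [← hA', rank_eq_rank_submatrix_castSucc_iff, hA', hc]
  refine (existsUnique_congr key).mpr (W.existsUnique_add_smul_mem π ?_
    (LinearMap.ker_funLeft_eq_span_single f r₀ hf) (by simp) ?_)
  · refine Submodule.disjoint_ker_of_finrank_le π ?_
    rw [← hW, ← rank_eq_finrank_span_cols, ← rank_eq_finrank_span_cols, h₁]
  · rw [← hW]
    exact (rank_eq_rank_submatrix_castSucc_iff (A.submatrix f id)).mp h₂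

theorem rank_add_single_one_eq_iff_ne [DecidableEq R] (A : Matrix R (Fin (n + 1)) (ZMod 2))
    (f : R' → R) (r₀ : R) (hf : Set.range f = {r₀}ᶜ)
    (h₁ : (A.submatrix f Fin.castSucc).rank = (A.submatrix id Fin.castSucc).rank)
    (h₂ : (A.submatrix f id).rank = (A.submatrix f Fin.castSucc).rank) :
    (A + single r₀ (Fin.last n) 1).rank = (A.submatrix id Fin.castSucc).rank ↔
      A.rank ≠ (A.submatrix id Fin.castSucc).rank := by
  obtain ⟨t₀, ht₀, huniq⟩ := A.existsUnique_rank_add_single_eq f r₀ hf h₁ h₂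
  have hP (t : ZMod 2) : (A + single r₀ (Fin.last n) t).rank =
      (A.submatrix id Fin.castSucc).rank ↔ t = t₀ := ⟨huniq t, fun h => h ▸ ht₀⟩
  have h0 := hP 0
  rw [single_zero, add_zero] at h0
  rw [hP 1, Ne, h0]
  exact (by decide : ∀ t : ZMod 2, 1 = t ↔ ¬0 = t) t₀

end Matrix

theorem Sum.range_map_castSucc_id (a : ℕ) (β : Type*) :
    Set.range (Sum.map Fin.castSucc id : Fin a ⊕ β → Fin (a + 1) ⊕ β) =
      {Sum.inl (Fin.last a)}ᶜ := by
  ext (r | r) <;> simp [Fin.exists_castSucc_eq]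

theorem Sum.range_map_id_castSucc (α : Type*) (b : ℕ) :
    Set.range (Sum.map id Fin.castSucc : α ⊕ Fin b → α ⊕ Fin (b + 1)) =
      {Sum.inr (Fin.last b)}ᶜ := by
  ext (r | r) <;> simp [Fin.exists_castSucc_eq]

section SubMat

variable {s m k : ℕ} (α : Fin (s + k - 1) → ZMod 2) (β : Fin (s + m + k - 1) → ZMod 2)

theorem subMat_submatrix {a' b' kc a'' b'' kc'' : ℕ} (fa : Fin a'' → Fin a')
    (fb : Fin b'' → Fin b') (fc : Fin kc'' → Fin kc) (hfa : ∀ i, (fa i : ℕ) = i)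
    (hfb : ∀ i, (fb i : ℕ) = i) (hfc : ∀ j, (fc j : ℕ) = j) :
    (subMat s m k a' b' kc α β).submatrix (Sum.map fa fb) fc =
      subMat s m k a'' b'' kc'' α β := by
  ext (i | i) j <;> simp [subMat, hfa, hfb, hfc]

theorem subMat_submatrix_castSucc (a' b' n : ℕ) :
    (subMat s m k a' b' (n + 1) α β).submatrix id Fin.castSucc = subMat s m k a' b' n α β := by
  ext (i | i) j <;> rfl

theorem subMat_add_single_fst {a b n : ℕ} {i : Fin (s + k - 1)} (hi : (i : ℕ) = a + n)
    (t : ZMod 2) : subMat s m k (a + 1) b (n + 1) (α + Pi.single i t) β =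
      subMat s m k (a + 1) b (n + 1) α β + single (Sum.inl (Fin.last a)) (Fin.last n) t := by
  ext (r | r) c
  · by_cases hrc : r = Fin.last a ∧ c = Fin.last n
    · obtain ⟨rfl, rfl⟩ := hrc
      simp [subMat, ← hi]
    · have hne : (r : ℕ) + c ≠ i := by
        simp only [Fin.ext_iff, Fin.val_last] at hrc; omega
      have hs : single (Sum.inl (Fin.last a) : Fin (a + 1) ⊕ Fin b) (Fin.last n) t
          (Sum.inl r) c = 0 :=
        single_apply_of_ne _ _ _ _ _ (by simpa [eq_comm] using hrc)
      simp [subMat, Pi.single_apply, Fin.ext_iff, hne, hs]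
  · simp [subMat]

theorem subMat_add_single_snd {a b n : ℕ} {i : Fin (s + m + k - 1)} (hi : (i : ℕ) = b + n)
    (t : ZMod 2) : subMat s m k a (b + 1) (n + 1) α (β + Pi.single i t) =
      subMat s m k a (b + 1) (n + 1) α β + single (Sum.inr (Fin.last b)) (Fin.last n) t := by
  ext (r | r) c
  · simp [subMat]
  · by_cases hrc : r = Fin.last b ∧ c = Fin.last n
    · obtain ⟨rfl, rfl⟩ := hrc
      simp [subMat, ← hi]
    · have hne : (r : ℕ) + c ≠ i := by
        simp only [Fin.ext_iff, Fin.val_last] at hrc; omega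
      have hs : single (Sum.inr (Fin.last b) : Fin a ⊕ Fin (b + 1)) (Fin.last n) t
          (Sum.inr r) c = 0 :=
        single_apply_of_ne _ _ _ _ _ (by simpa [eq_comm] using hrc)
      simp [subMat, Pi.single_apply, Fin.ext_iff, hne, hs]

theorem subMat_add_single_fst_of_le {a' b' kc : ℕ} {i : Fin (s + k - 1)} (h : a' + kc ≤ i + 1)
    (t : ZMod 2) : subMat s m k a' b' kc (α + Pi.single i t) β = subMat s m k a' b' kc α β := by
  ext (r | r) c
  · have hne : (r : ℕ) + c ≠ i := by omega
    simp [subMat, Pi.single_apply, Fin.ext_iff, hne]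
  · rfl

theorem subMat_add_single_snd_of_le {a' b' kc : ℕ} {i : Fin (s + m + k - 1)}
    (h : b' + kc ≤ i + 1) (t : ZMod 2) :
    subMat s m k a' b' kc α (β + Pi.single i t) = subMat s m k a' b' kc α β := by
  ext (r | r) c
  · rfl
  · have hne : (r : ℕ) + c ≠ i := by omega
    simp [subMat, Pi.single_apply, Fin.ext_iff, hne]

theorem subRank_mono {a' b' kc a'' b'' kc'' : ℕ} (ha : a'' ≤ a') (hb : b'' ≤ b')
    (hk : kc'' ≤ kc) : subRank s m k a'' b'' kc'' α β ≤ subRank s m k a' b' kc α β := by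
  rw [subRank, ← subMat_submatrix α β (Fin.castLE ha) (Fin.castLE hb) (Fin.castLE hk)
    (fun _ => rfl) (fun _ => rfl) (fun _ => rfl)]
  exact rank_submatrix_le _ _ _

theorem subRank_succ_le (a' b' n : ℕ) :
    subRank s m k a' b' (n + 1) α β ≤ subRank s m k a' b' n α β + 1 := by
  rw [subRank, subRank, ← subMat_submatrix_castSucc]
  exact rank_le_rank_submatrix_castSucc_add_one _

theorem subRank_add_single_fst_eq_iff {a b n : ℕ} {i : Fin (s + k - 1)} (hi : (i : ℕ) = a + n)
    (h₁ : subRank s m k a b n α β = subRank s m k (a + 1) b n α β)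
    (h₂ : subRank s m k a b (n + 1) α β = subRank s m k a b n α β) :
    subRank s m k (a + 1) b (n + 1) (α + Pi.single i 1) β = subRank s m k (a + 1) b n α β ↔
      subRank s m k (a + 1) b (n + 1) α β ≠ subRank s m k (a + 1) b n α β := by
  have hdel (kc' kc : ℕ) (fc : Fin kc' → Fin kc) (hfc : ∀ j, (fc j : ℕ) = j) :
      (subMat s m k (a + 1) b kc α β).submatrix (Sum.map Fin.castSucc id) fc =
        subMat s m k a b kc' α β :=
    subMat_submatrix α β _ _ fc (fun _ => rfl) (fun _ => rfl) hfc
  have := (subMat s m k (a + 1) b (n + 1) α β).rank_add_single_one_eq_iff_ne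
    (Sum.map Fin.castSucc id) _ (Sum.range_map_castSucc_id a (Fin b))
    (by rw [hdel n _ Fin.castSucc (fun _ => rfl), subMat_submatrix_castSucc]; exact h₁)
    (by rw [hdel _ _ id (fun _ => rfl), hdel n _ Fin.castSucc (fun _ => rfl)]; exact h₂)
  rwa [subMat_submatrix_castSucc, ← subMat_add_single_fst α β hi] at this

theorem subRank_add_single_snd_eq_iff {a b b' n : ℕ} (hb : b + 1 = b') {i : Fin (s + m + k - 1)}
    (hi : (i : ℕ) = b + n)
    (h₁ : subRank s m k a b n α β = subRank s m k a b' n α β)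
    (h₂ : subRank s m k a b (n + 1) α β = subRank s m k a b n α β) :
    subRank s m k a b' (n + 1) α (β + Pi.single i 1) = subRank s m k a b' n α β ↔
      subRank s m k a b' (n + 1) α β ≠ subRank s m k a b' n α β := by
  subst hb
  have hdel (kc' kc : ℕ) (fc : Fin kc' → Fin kc) (hfc : ∀ j, (fc j : ℕ) = j) :
      (subMat s m k a (b + 1) kc α β).submatrix (Sum.map id Fin.castSucc) fc =
        subMat s m k a b kc' α β :=
    subMat_submatrix α β _ _ fc (fun _ => rfl) (fun _ => rfl) hfc
  have := (subMat s m k a (b + 1) (n + 1) α β).rank_add_single_one_eq_iff_ne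
    (Sum.map id Fin.castSucc) _ (Sum.range_map_id_castSucc (Fin a) b)
    (by rw [hdel n _ Fin.castSucc (fun _ => rfl), subMat_submatrix_castSucc]; exact h₁)
    (by rw [hdel _ _ id (fun _ => rfl), hdel n _ Fin.castSucc (fun _ => rfl)]; exact h₂)
  rwa [subMat_submatrix_castSucc, ← subMat_add_single_snd α β hi] at this

end SubMat

theorem Nat.card_eq_two_mul_card_of_involutive {X : Type*} [Finite X] {P Q : X → Prop}
    (σ : X → X) (hσ : Function.Involutive σ) (hP : ∀ x, P x → P (σ x))
    (hQ : ∀ x, P x → (Q (σ x) ↔ ¬Q x)) :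
    Nat.card {x // P x} = 2 * Nat.card {x // P x ∧ Q x} := by
  classical
  have hswap : {x // P x ∧ ¬Q x} ≃ {x // P x ∧ Q x} :=
    hσ.toPerm.subtypeEquiv fun x =>
      ⟨fun ⟨hx, hq⟩ => ⟨hP x hx, (hQ x hx).mpr hq⟩, fun ⟨hx, hq⟩ =>
        have hx' : P x := hσ x ▸ hP _ hx
        ⟨hx', (hQ x hx').mp hq⟩⟩
  calc Nat.card {x // P x}
      = Nat.card ({x // P x ∧ Q x} ⊕ {x // P x ∧ ¬Q x}) :=
        Nat.card_congr <| (Equiv.sumCompl fun x : {x // P x} => Q x).symm.trans <|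
          (Equiv.subtypeSubtypeEquivSubtypeInter P Q).sumCongr
            (Equiv.subtypeSubtypeEquivSubtypeInter P fun x => ¬Q x)
    _ = 2 * Nat.card {x // P x ∧ Q x} := by rw [Nat.card_sum, Nat.card_congr hswap, two_mul]

theorem involutive_add_single_one {ι : Type*} [DecidableEq ι] (i : ι) :
    Function.Involutive fun v : ι → ZMod 2 => v + Pi.single i 1 := fun v =>
  show v + Pi.single i 1 + Pi.single i 1 = v by
  rw [add_assoc, ← Pi.single_add, (by decide : (1 : ZMod 2) + 1 = 0), Pi.single_zero, add_zero]

section CornerFlips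

variable {a m n j : ℕ}
  (p : (Fin (a + 1 + (n + 1) - 1) → ZMod 2) × (Fin (a + 1 + m + (n + 1) - 1) → ZMod 2))

-- With `s = a + 1` and `k = n + 1`, these are the ranks of `M(s-1, s+m-1, k-1)`,
-- `M(s-1, s+m-1, k)`, `M(s, s+m-1, k-1)` and `M(s, s+m, k-1)`.
def LowerRanksEq (a m n j : ℕ)
    (p : (Fin (a + 1 + (n + 1) - 1) → ZMod 2) × (Fin (a + 1 + m + (n + 1) - 1) → ZMod 2)) :
    Prop :=
  subRank (a + 1) m (n + 1) a (a + 1 + m - 1) n p.1 p.2 = j ∧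
    subRank (a + 1) m (n + 1) a (a + 1 + m - 1) (n + 1) p.1 p.2 = j ∧
    subRank (a + 1) m (n + 1) (a + 1) (a + 1 + m - 1) n p.1 p.2 = j ∧
    subRank (a + 1) m (n + 1) (a + 1) (a + 1 + m) n p.1 p.2 = j

def flipCornerFst (a m n : ℕ)
    (p : (Fin (a + 1 + (n + 1) - 1) → ZMod 2) × (Fin (a + 1 + m + (n + 1) - 1) → ZMod 2)) :
    (Fin (a + 1 + (n + 1) - 1) → ZMod 2) × (Fin (a + 1 + m + (n + 1) - 1) → ZMod 2) :=
  (p.1 + Pi.single ⟨a + n, by omega⟩ 1, p.2)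

def flipCornerSnd (a m n : ℕ)
    (p : (Fin (a + 1 + (n + 1) - 1) → ZMod 2) × (Fin (a + 1 + m + (n + 1) - 1) → ZMod 2)) :
    (Fin (a + 1 + (n + 1) - 1) → ZMod 2) × (Fin (a + 1 + m + (n + 1) - 1) → ZMod 2) :=
  (p.1, p.2 + Pi.single ⟨a + m + n, by omega⟩ 1)

theorem flipCornerFst_involutive (a m n : ℕ) : Function.Involutive (flipCornerFst a m n) :=
  fun p => Prod.ext (involutive_add_single_one _ p.1) rfl

theorem flipCornerSnd_involutive (a m n : ℕ) : Function.Involutive (flipCornerSnd a m n) :=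
  fun p => Prod.ext rfl (involutive_add_single_one _ p.2)

theorem subRank_corner_eq_succ (h : LowerRanksEq a m n j p)
    (h₄ : subRank (a + 1) m (n + 1) (a + 1) (a + 1 + m - 1) (n + 1) p.1 p.2 = j + 1) :
    subRank (a + 1) m (n + 1) (a + 1) (a + 1 + m) (n + 1) p.1 p.2 = j + 1 := by
  have hlo := subRank_mono p.1 p.2 (le_refl (a + 1)) (Nat.sub_le (a + 1 + m) 1) (le_refl (n + 1))
  have hhi := subRank_succ_le p.1 p.2 (a + 1) (a + 1 + m) n
  rw [h.2.2.2] at hhi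
  omega

theorem lowerRanksEq_flipCornerFst_iff :
    LowerRanksEq a m n j (flipCornerFst a m n p) ∧
        subRank (a + 1) m (n + 1) (a + 1) (a + 1 + m - 1) (n + 1)
          (flipCornerFst a m n p).1 (flipCornerFst a m n p).2 = j ↔
      LowerRanksEq a m n j p ∧
        subRank (a + 1) m (n + 1) (a + 1) (a + 1 + m - 1) (n + 1) p.1 p.2 = j + 1 := by
  have hL : LowerRanksEq a m n j (flipCornerFst a m n p) ↔ LowerRanksEq a m n j p := by
    simp (disch := (dsimp only; omega)) only
      [LowerRanksEq, flipCornerFst, subRank, subMat_add_single_fst_of_le]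
  rw [hL]
  refine and_congr_right fun ⟨h₁, h₂, h₃, _⟩ => ?_
  have hflip := subRank_add_single_fst_eq_iff p.1 p.2 (i := ⟨a + n, by omega⟩) rfl
    (h₁.trans h₃.symm) (h₂.trans h₁.symm)
  have hlo := subRank_mono p.1 p.2 le_rfl le_rfl (Nat.le_add_right n 1) (a' := a + 1)
    (b' := a + 1 + m - 1)
  have hhi := subRank_succ_le p.1 p.2 (a + 1) (a + 1 + m - 1) n
  rw [h₃] at hflip hlo hhi
  simp only [flipCornerFst]
  omega

theorem lowerRanksEq_flipCornerSnd
    (h : LowerRanksEq a m n j p ∧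
      subRank (a + 1) m (n + 1) (a + 1) (a + 1 + m - 1) (n + 1) p.1 p.2 = j) :
    LowerRanksEq a m n j (flipCornerSnd a m n p) ∧
      subRank (a + 1) m (n + 1) (a + 1) (a + 1 + m - 1) (n + 1)
        (flipCornerSnd a m n p).1 (flipCornerSnd a m n p).2 = j := by
  simpa (disch := (dsimp only; omega)) only
    [LowerRanksEq, flipCornerSnd, subRank, subMat_add_single_snd_of_le] using h

theorem subRank_flipCornerSnd_eq_iff
    (h : LowerRanksEq a m n j p ∧
      subRank (a + 1) m (n + 1) (a + 1) (a + 1 + m - 1) (n + 1) p.1 p.2 = j) :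
    subRank (a + 1) m (n + 1) (a + 1) (a + 1 + m) (n + 1)
        (flipCornerSnd a m n p).1 (flipCornerSnd a m n p).2 = j ↔
      subRank (a + 1) m (n + 1) (a + 1) (a + 1 + m) (n + 1) p.1 p.2 ≠ j := by
  obtain ⟨⟨-, -, h₃, h₅⟩, h₄⟩ := h
  rw [← h₅]
  exact subRank_add_single_snd_eq_iff p.1 p.2 (by omega) (i := ⟨a + m + n, by omega⟩)
    (by dsimp only; omega) (h₃.trans h₅.symm) (h₄.trans h₃.symm)

end CornerFlips

theorem card_double_jump_eq_two_mul_card_stable_general (s m k j : ℕ) (hs : 2 ≤ s) (hk : 2 ≤ k) :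
    Nat.card {p : (Fin (s + k - 1) → ZMod 2) × (Fin (s + m + k - 1) → ZMod 2) //
        subRank s m k (s - 1) (s + m - 1) (k - 1) p.1 p.2 = j ∧
        subRank s m k (s - 1) (s + m - 1) k p.1 p.2 = j ∧
        subRank s m k s (s + m - 1) (k - 1) p.1 p.2 = j ∧
        subRank s m k s (s + m - 1) k p.1 p.2 = j + 1 ∧
        subRank s m k s (s + m) (k - 1) p.1 p.2 = j ∧
        subRank s m k s (s + m) k p.1 p.2 = j + 1} =
    2 * Nat.card {p : (Fin (s + k - 1) → ZMod 2) × (Fin (s + m + k - 1) → ZMod 2) //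
        subRank s m k (s - 1) (s + m - 1) (k - 1) p.1 p.2 = j ∧
        subRank s m k (s - 1) (s + m - 1) k p.1 p.2 = j ∧
        subRank s m k s (s + m - 1) (k - 1) p.1 p.2 = j ∧
        subRank s m k s (s + m - 1) k p.1 p.2 = j ∧
        subRank s m k s (s + m) (k - 1) p.1 p.2 = j ∧
        subRank s m k s (s + m) k p.1 p.2 = j} := by
  obtain ⟨a, rfl⟩ : ∃ a, s = a + 1 := ⟨s - 1, by omega⟩
  obtain ⟨n, rfl⟩ : ∃ n, k = n + 1 := ⟨k - 1, by omega⟩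
  simp only [Nat.add_sub_cancel]
  let r₄ (p : (Fin (a + 1 + (n + 1) - 1) → ZMod 2) ×
      (Fin (a + 1 + m + (n + 1) - 1) → ZMod 2)) :=
    subRank (a + 1) m (n + 1) (a + 1) (a + 1 + m - 1) (n + 1) p.1 p.2
  let r₆ (p : (Fin (a + 1 + (n + 1) - 1) → ZMod 2) ×
      (Fin (a + 1 + m + (n + 1) - 1) → ZMod 2)) :=
    subRank (a + 1) m (n + 1) (a + 1) (a + 1 + m) (n + 1) p.1 p.2
  calc _ = Nat.card {p // LowerRanksEq a m n j p ∧ r₄ p = j + 1} :=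
        Nat.card_congr <| Equiv.subtypeEquivRight fun p =>
          ⟨fun ⟨h₁, h₂, h₃, h₄, h₅, _⟩ => ⟨⟨h₁, h₂, h₃, h₅⟩, h₄⟩, fun ⟨h, h₄⟩ =>
            ⟨h.1, h.2.1, h.2.2.1, h₄, h.2.2.2, subRank_corner_eq_succ p h h₄⟩⟩
    _ = Nat.card {p // LowerRanksEq a m n j p ∧ r₄ p = j} :=
        Nat.card_congr <| (flipCornerFst_involutive a m n).toPerm.subtypeEquiv fun p =>
          (lowerRanksEq_flipCornerFst_iff p).symm
    _ = 2 * Nat.card {p // (LowerRanksEq a m n j p ∧ r₄ p = j) ∧ r₆ p = j} :=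
        Nat.card_eq_two_mul_card_of_involutive _ (flipCornerSnd_involutive a m n)
          lowerRanksEq_flipCornerSnd subRank_flipCornerSnd_eq_iff
    _ = _ := congrArg (2 * ·) <| Nat.card_congr <| Equiv.subtypeEquivRight fun p => by
        simp only [LowerRanksEq, r₄, r₆]
        tauto

theorem card_double_jump_eq_two_mul_card_stable (s m k j : ℕ) (hs : 2 ≤ s) (hk : 2 ≤ k)
    (hj : j ≤ min (2 * s + m - 2) (k - 1)) :
    Nat.card {p : (Fin (s + k - 1) → ZMod 2) × (Fin (s + m + k - 1) → ZMod 2) //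
        subRank s m k (s - 1) (s + m - 1) (k - 1) p.1 p.2 = j ∧
        subRank s m k (s - 1) (s + m - 1) k p.1 p.2 = j ∧
        subRank s m k s (s + m - 1) (k - 1) p.1 p.2 = j ∧
        subRank s m k s (s + m - 1) k p.1 p.2 = j + 1 ∧
        subRank s m k s (s + m) (k - 1) p.1 p.2 = j ∧
        subRank s m k s (s + m) k p.1 p.2 = j + 1} =
    2 * Nat.card {p : (Fin (s + k - 1) → ZMod 2) × (Fin (s + m + k - 1) → ZMod 2) //
        subRank s m k (s - 1) (s + m - 1) (k - 1) p.1 p.2 = j ∧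
        subRank s m k (s - 1) (s + m - 1) k p.1 p.2 = j ∧
        subRank s m k s (s + m - 1) (k - 1) p.1 p.2 = j ∧
        subRank s m k s (s + m - 1) k p.1 p.2 = j ∧
        subRank s m k s (s + m) (k - 1) p.1 p.2 = j ∧
        subRank s m k s (s + m) k p.1 p.2 = j} :=
  card_double_jump_eq_two_mul_card_stable_general s m k j hs hk
end

section
/- Let s ≥ 2, m ≥ 0, and let i,k satisfy 1 ≤ i ≤ 2s+m−3 and k ≥ i+1. Define σ_i(s,m,k) to be the number of pairs (α,β) ∈ F_2^{s+k−1} × F_2^{s+m+k−1} such that rank M(s−1, s+m−1, k) = rank M(s, s+m−1, k) = rank M(s, s+m, k) = i. Then σ_i(s,m,k) = 4·Γ_i^{[s−1, s+m−1]×i} − Γ_{i+1}^{[s−1, s+m−1]×(i+1)}; in particular σ_i(s,m,k) does not depend on k. -/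
open Matrix

open Matrix Submodule Set
namespace SP
abbrev F2' := ZMod 2
def colFn (a b : ℕ) (A B : ℕ → ZMod 2) (j : ℕ) : (Fin a ⊕ Fin b) → ZMod 2 :=
  Sum.elim (fun p => A (p + j)) (fun p => B (p + j))
def seqMat (a b k : ℕ) (A B : ℕ → ZMod 2) : Matrix (Fin a ⊕ Fin b) (Fin k) (ZMod 2) :=
  Matrix.of fun r j => colFn a b A B j r
lemma range_fin_eq_image {X : Type*} (g : ℕ → X) (k : ℕ) :
    (Set.range fun j : Fin k => g j) = g '' {t | t < k} := by
  ext x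
  constructor
  · rintro ⟨j, rfl⟩; exact ⟨j, j.isLt, rfl⟩
  · rintro ⟨t, ht, rfl⟩; exact ⟨⟨t, ht⟩, rfl⟩
lemma rank_seqMat (a b k : ℕ) (A B : ℕ → ZMod 2) :
    (seqMat a b k A B).rank =
      Module.finrank (ZMod 2) (span (ZMod 2) (colFn a b A B '' {t | t < k})) := by
  rw [Matrix.rank_eq_finrank_span_cols, ← range_fin_eq_image]
  rfl
def resMap (a b a' b' : ℕ) (ha : a' ≤ a) (hb : b' ≤ b) :
    ((Fin a ⊕ Fin b) → ZMod 2) →ₗ[ZMod 2] ((Fin a' ⊕ Fin b') → ZMod 2) :=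
  LinearMap.funLeft _ _ (Sum.map (Fin.castLE ha) (Fin.castLE hb))
lemma resMap_colFn (a b a' b' : ℕ) (ha : a' ≤ a) (hb : b' ≤ b) (A B : ℕ → ZMod 2) (j : ℕ) :
    resMap a b a' b' ha hb (colFn a b A B j) = colFn a' b' A B j := by
  funext r; cases r with
  | inl p => rfl
  | inr p => rfl
def shMap (a b : ℕ) :
    ((Fin a ⊕ Fin b) → ZMod 2) →ₗ[ZMod 2] ((Fin (a - 1) ⊕ Fin (b - 1)) → ZMod 2) :=
  LinearMap.funLeft _ _
    (Sum.map (fun p : Fin (a-1) => (⟨p + 1, by omega⟩ : Fin a))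
      (fun p : Fin (b-1) => (⟨p + 1, by omega⟩ : Fin b)))
lemma shMap_colFn (a b : ℕ) (A B : ℕ → ZMod 2) (j : ℕ) :
    shMap a b (colFn a b A B j) = colFn (a - 1) (b - 1) A B (j + 1) := by
  funext r; cases r with
  | inl p =>
      show A ((p : ℕ) + 1 + j) = A ((p : ℕ) + (j + 1))
      exact congrArg A (by omega)
  | inr p =>
      show B ((p : ℕ) + 1 + j) = B ((p : ℕ) + (j + 1))
      exact congrArg B (by omega)
lemma span_res (a b a' b' k : ℕ) (ha : a' ≤ a) (hb : b' ≤ b) (A B : ℕ → ZMod 2) :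
    span (ZMod 2) (colFn a' b' A B '' {t | t < k}) =
      Submodule.map (resMap a b a' b' ha hb) (span (ZMod 2) (colFn a b A B '' {t | t < k})) := by
  rw [Submodule.map_span, ← Set.image_comp]
  congr 1
  apply Set.image_congr
  intro t _
  exact (resMap_colFn a b a' b' ha hb A B t).symm


lemma li_helper {M : Type*} [AddCommGroup M] [Module (ZMod 2) M] (n : ℕ) (v : ℕ → M)
    (h : ∀ j < n, v j ∉ span (ZMod 2) (v '' {t | t < j})) :
    LinearIndependent (ZMod 2) (fun l : Fin n => v l) := by
  induction n with
  | zero => exact linearIndependent_empty_type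
  | succ n IH =>
    have hs : (fun l : Fin (n+1) => v l) = Fin.snoc (fun l : Fin n => v l) (v n) := by
      funext l
      induction l using Fin.lastCases with
      | last => simp [Fin.snoc_last]
      | cast p => simp [Fin.snoc_castSucc]
    rw [hs, linearIndependent_fin_snoc]
    constructor
    · exact IH fun j hj => h j (by omega)
    · rw [range_fin_eq_image]
      exact h n (by omega)

lemma qinj (a b k i : ℕ) (A B : ℕ → ZMod 2)
    (hQ : (seqMat (a-1) (b-1) k A B).rank = i) (hD : (seqMat a b k A B).rank = i) :
    ∀ x ∈ span (ZMod 2) (colFn a b A B '' {t | t < k}),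
      ∀ y ∈ span (ZMod 2) (colFn a b A B '' {t | t < k}),
        resMap a b (a-1) (b-1) (Nat.sub_le a 1) (Nat.sub_le b 1) x =
          resMap a b (a-1) (b-1) (Nat.sub_le a 1) (Nat.sub_le b 1) y → x = y := by
  set Q := resMap a b (a-1) (b-1) (Nat.sub_le a 1) (Nat.sub_le b 1) with hQdef
  set V := span (ZMod 2) (colFn a b A B '' {t | t < k}) with hV
  have h1 : Module.finrank (ZMod 2) V = i := by rw [← rank_seqMat]; exact hD
  have h2 : Module.finrank (ZMod 2) (Submodule.map Q V) = i := by
    rw [← span_res a b (a-1) (b-1) k (Nat.sub_le a 1) (Nat.sub_le b 1) A B, ← rank_seqMat]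
    exact hQ
  set f := Q.domRestrict V with hf
  have hrange : LinearMap.range f = Submodule.map Q V := LinearMap.range_domRestrict V Q
  have hrk := LinearMap.finrank_range_add_finrank_ker f
  rw [hrange, h2, h1] at hrk
  have hker : LinearMap.ker f = ⊥ := by
    rw [← Submodule.finrank_eq_zero (R := ZMod 2)]
    omega
  intro x hx y hy hxy
  have hmem : (⟨x, hx⟩ - ⟨y, hy⟩ : V) ∈ LinearMap.ker f := by
    rw [LinearMap.mem_ker, map_sub]
    have e1 : f ⟨x, hx⟩ = Q x := rfl
    have e2 : f ⟨y, hy⟩ = Q y := rfl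
    rw [e1, e2, hxy, sub_self]
  rw [hker, Submodule.mem_bot, sub_eq_zero] at hmem
  exact Subtype.ext_iff.mp hmem
end SP

namespace SP
set_option maxHeartbeats 1000000 in
theorem main_struct (a b i k : ℕ) (A B : ℕ → ZMod 2) (hi : 1 ≤ i) (hk : i+1 ≤ k)
    (hQ : (seqMat (a-1) (b-1) k A B).rank = i) (hD : (seqMat a b k A B).rank = i) :
    (∀ j < k, colFn a b A B j ∈ span (ZMod 2) (colFn a b A B '' {t | t < i})) ∧
    (seqMat (a-1) (b-1) i A B).rank = i ∧ (seqMat (a-1) (b-1) (i+1) A B).rank = i := by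
  set cf := colFn a b A B with hcfdef
  set cf' := colFn (a-1) (b-1) A B with hcf'def
  set Q := resMap a b (a-1) (b-1) (Nat.sub_le a 1) (Nat.sub_le b 1) with hQdef
  set P := shMap a b with hPdef
  have hQc : ∀ j, Q (cf j) = cf' j := fun j => resMap_colFn a b (a-1) (b-1) _ _ A B j
  have hPc : ∀ j, P (cf j) = cf' (j+1) := fun j => shMap_colFn a b A B j
  have hinj := qinj a b k i A B hQ hD
  set V := span (ZMod 2) (cf '' {t | t < k}) with hVdef
  have hWleV : ∀ j, j ≤ k → span (ZMod 2) (cf '' {t | t < j}) ≤ V :=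
    fun j hj => span_mono (image_mono fun t ht => lt_of_lt_of_le ht hj)
  have hmap : ∀ j, Submodule.map Q (span (ZMod 2) (cf '' {t | t < j}))
      = span (ZMod 2) (cf' '' {t | t < j}) :=
    fun j => (span_res a b (a-1) (b-1) j _ _ A B).symm
  have hVi : Module.finrank (ZMod 2) V = i := by rw [hVdef, ← rank_seqMat]; exact hD
  -- propagation
  have hprop : ∀ j < k, cf j ∈ span (ZMod 2) (cf '' {t | t < j}) →
      ∀ t < k, cf t ∈ span (ZMod 2) (cf '' {t | t < j}) := by
    intro j hj hdep t
    induction t using Nat.strong_induction_on with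
    | _ t IH =>
    intro htk
    by_cases hlt : t < j
    · exact subset_span ⟨t, hlt, rfl⟩
    push_neg at hlt
    have hQmem : Q (cf t) ∈ Submodule.map Q (span (ZMod 2) (cf '' {x | x < j})) := by
      rcases Nat.eq_or_lt_of_le hlt with rfl | hgt
      · exact Submodule.mem_map_of_mem hdep
      · have h1 : cf (t-1) ∈ span (ZMod 2) (cf '' {x | x < j}) := IH (t-1) (by omega) (by omega)
        have h2 : Q (cf t) = P (cf (t-1)) := by
          rw [hQc, hPc]; exact congrArg cf' (by omega)
        rw [h2]
        have h3 : P (cf (t-1)) ∈ Submodule.map P (span (ZMod 2) (cf '' {x | x < j})) :=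
          Submodule.mem_map_of_mem h1
        have h4 : Submodule.map P (span (ZMod 2) (cf '' {x | x < j}))
            ≤ span (ZMod 2) (cf' '' {x | x < j + 1}) := by
          rw [Submodule.map_span, ← Set.image_comp]
          refine span_le.mpr ?_
          rintro y ⟨x, hx, rfl⟩
          show P (cf x) ∈ _
          rw [hPc]
          exact subset_span ⟨x+1, by simp only [Set.mem_setOf_eq] at hx ⊢; omega, rfl⟩
        have hspaneq : span (ZMod 2) (cf '' {x | x < j + 1})
            = span (ZMod 2) (cf '' {x | x < j}) := by
          apply le_antisymm
          · refine span_le.mpr ?_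
            rintro y ⟨x, hx, rfl⟩
            simp only [Set.mem_setOf_eq] at hx
            rcases Nat.lt_succ_iff_lt_or_eq.mp hx with h' | rfl
            · exact subset_span ⟨x, h', rfl⟩
            · exact hdep
          · exact span_mono (image_mono fun x hx => Nat.lt_succ_of_lt hx)
        have h5 : span (ZMod 2) (cf' '' {x | x < j + 1})
            = Submodule.map Q (span (ZMod 2) (cf '' {x | x < j})) := by
          rw [← hmap (j+1), hspaneq]
        exact h5 ▸ h4 h3
    obtain ⟨w, hw, hQw⟩ := hQmem
    have hcfV : cf t ∈ V := subset_span ⟨t, htk, rfl⟩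
    have hwV : w ∈ V := hWleV j (by omega) hw
    have hwe : w = cf t := hinj w hwV (cf t) hcfV hQw
    exact hwe ▸ hw
  -- dependence bound
  have hbound : ∀ j < k, cf j ∈ span (ZMod 2) (cf '' {t | t < j}) → i ≤ j := by
    intro j hj hdep
    have hVW : V = span (ZMod 2) (cf '' {t | t < j}) := by
      apply le_antisymm
      · refine span_le.mpr ?_
        rintro y ⟨t, ht, rfl⟩
        exact hprop j hj hdep t ht
      · exact hWleV j (le_of_lt hj)
    have hle : Module.finrank (ZMod 2) V ≤ j := by
      rw [hVW, ← rank_seqMat a b j A B]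
      calc (seqMat a b j A B).rank ≤ Fintype.card (Fin j) := Matrix.rank_le_card_width _
        _ = j := Fintype.card_fin j
    omega
  -- independence of first i small columns
  have hnm : ∀ j < i, cf' j ∉ span (ZMod 2) (cf' '' {t | t < j}) := by
    intro j hj hmem
    rw [← hmap j] at hmem
    rw [← hQc j] at hmem
    obtain ⟨w, hw, hQw⟩ := hmem
    have hjk : j < k := by omega
    have hwe : w = cf j := hinj w (hWleV j (by omega) hw) (cf j) (subset_span ⟨j, hjk, rfl⟩) hQw
    exact absurd (hbound j hjk (hwe ▸ hw)) (by omega)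
  have hli : LinearIndependent (ZMod 2) (fun l : Fin i => cf' l) := li_helper i cf' hnm
  have h1 : Module.finrank (ZMod 2) (span (ZMod 2) (cf' '' {t | t < i})) = i := by
    rw [← range_fin_eq_image]
    rw [finrank_span_eq_card hli]
    exact Fintype.card_fin i
  have h2 : Module.finrank (ZMod 2) (span (ZMod 2) (cf' '' {t | t < k})) = i := by
    rw [← rank_seqMat]; exact hQ
  have heq : span (ZMod 2) (cf' '' {t | t < i}) = span (ZMod 2) (cf' '' {t | t < k}) :=
    Submodule.eq_of_le_of_finrank_le (span_mono (image_mono fun t ht => by simp only [Set.mem_setOf_eq] at ht ⊢; omega))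
      (by rw [h1, h2])
  refine ⟨?_, ?_, ?_⟩
  · intro j hjk
    have hj' : cf' j ∈ span (ZMod 2) (cf' '' {t | t < i}) := heq ▸ subset_span ⟨j, hjk, rfl⟩
    rw [← hQc j, ← hmap i] at hj'
    obtain ⟨w, hw, hQw⟩ := hj'
    have hwe : w = cf j :=
      hinj w (hWleV i (by omega) hw) (cf j) (subset_span ⟨j, hjk, rfl⟩) hQw
    exact hwe ▸ hw
  · rw [rank_seqMat]; exact h1
  · rw [rank_seqMat]
    have e1 : span (ZMod 2) (cf' '' {t | t < i+1}) = span (ZMod 2) (cf' '' {t | t < i}) := by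
      apply le_antisymm
      · exact heq ▸ span_mono (image_mono fun t ht => by simp only [Set.mem_setOf_eq] at ht ⊢; omega)
      · exact span_mono (image_mono fun t ht => Nat.lt_succ_of_lt ht)
    rw [e1]; exact h1
end SP

namespace SP

lemma rank_seqMat_mono (a b a' b' k : ℕ) (ha : a' ≤ a) (hb : b' ≤ b) (A B : ℕ → ZMod 2) :
    (seqMat a' b' k A B).rank ≤ (seqMat a b k A B).rank := by
  rw [rank_seqMat, rank_seqMat, span_res a b a' b' k ha hb]
  exact Submodule.finrank_map_le _ _

def recSeq (c i : ℕ) (lam : ℕ → ZMod 2) (init : ℕ → ZMod 2) : ℕ → ZMod 2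
  | t => if h : t ≤ c then init t else ∑ d : Fin i, lam d * recSeq c i lam init (t - (i - d))
  termination_by t => t
  decreasing_by have := d.isLt; omega

lemma recSeq_le {c i : ℕ} {lam init : ℕ → ZMod 2} {t : ℕ} (h : t ≤ c) :
    recSeq c i lam init t = init t := by
  rw [recSeq]; exact dif_pos h

lemma recSeq_gt {c i : ℕ} {lam init : ℕ → ZMod 2} {t : ℕ} (h : ¬ t ≤ c) (hi : i ≤ t) :
    recSeq c i lam init t = ∑ l : Fin i, lam l * recSeq c i lam init (t - i + l) := by
  rw [recSeq, dif_neg h]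
  apply Finset.sum_congr rfl
  intro l _
  have e : t - (i - (l:ℕ)) = t - i + (l:ℕ) := by have := l.isLt; omega
  rw [e]

lemma seq_claim (a i : ℕ) (ha : 1 ≤ a) (hi : 1 ≤ i) (lam : Fin i → ZMod 2) (A0 : ℕ → ZMod 2)
    (hbase : ∀ p, p + 1 < a → ∑ l : Fin i, lam l * A0 (p + l) = A0 (p + i)) :
    ∀ j, i ≤ j → ∀ p, p < a →
      recSeq (a+i-2) i (fun d => if h : d < i then lam ⟨d,h⟩ else 0) A0 (p + j)
        = ∑ l : Fin i, lam l *
            recSeq (a+i-2) i (fun d => if h : d < i then lam ⟨d,h⟩ else 0) A0 (p + (j - i + l)) := by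
  set lamN : ℕ → ZMod 2 := fun d => if h : d < i then lam ⟨d,h⟩ else 0 with hlamN
  set A : ℕ → ZMod 2 := recSeq (a+i-2) i lamN A0 with hA
  intro j
  induction j using Nat.strong_induction_on with
  | _ j IH =>
  intro hij p hpa
  by_cases hp : p + 1 < a
  · rcases Nat.eq_or_lt_of_le hij with rfl | hgt
    · have e0 : A (p + i) = A0 (p + i) := recSeq_le (by omega)
      rw [e0, ← hbase p hp]
      apply Finset.sum_congr rfl
      intro l _
      congr 1
      have e1 : (p + (i - i + (l:ℕ))) = p + (l:ℕ) := by omega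
      rw [e1, hA, recSeq_le (by have := l.isLt; omega)]
    · have e0 : A (p + j) = A ((p+1) + (j-1)) := congrArg A (by omega)
      rw [e0, IH (j-1) (by omega) (by omega) (p+1) (by omega)]
      apply Finset.sum_congr rfl
      intro l _
      congr 1
      exact congrArg A (by have := l.isLt; omega)
  · have egt := recSeq_gt (c := a+i-2) (i := i) (lam := lamN) (init := A0) (t := p + j)
      (by omega) (by omega)
    rw [hA, egt]
    apply Finset.sum_congr rfl
    intro l _
    congr 1
    · show (if h : (l:ℕ) < i then lam ⟨l,h⟩ else 0) = lam l
      rw [dif_pos l.isLt]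
    · exact congrArg (recSeq (a+i-2) i lamN A0) (by have := l.isLt; omega)

theorem uniq_ext (a b i k : ℕ) (A B A₂ B₂ : ℕ → ZMod 2) (ha : 1 ≤ a) (hb : 1 ≤ b) (hi : 1 ≤ i) (hk : i+1 ≤ k)
    (hQ : (seqMat (a-1) (b-1) k A B).rank = i) (hD : (seqMat a b k A B).rank = i)
    (hQ₂ : (seqMat (a-1) (b-1) k A₂ B₂).rank = i) (hD₂ : (seqMat a b k A₂ B₂).rank = i)
    (hA : ∀ t < a+i-1, A t = A₂ t) (hB : ∀ t < b+i-1, B t = B₂ t) :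
    (∀ t < a+k-1, A t = A₂ t) ∧ (∀ t < b+k-1, B t = B₂ t) := by
  have hsp := (main_struct a b i k A B hi hk hQ hD).1
  have hsp₂ := (main_struct a b i k A₂ B₂ hi hk hQ₂ hD₂).1
  have hinj := qinj a b k i A B hQ hD
  have hcol : ∀ j < k, colFn a b A B j = colFn a b A₂ B₂ j := by
    intro j
    induction j using Nat.strong_induction_on with
    | _ j IH =>
    intro hjk
    by_cases hji : j < i
    · funext r
      cases r with
      | inl p => exact hA _ (by have := p.isLt; omega)
      | inr p => exact hB _ (by have := p.isLt; omega)
    push_neg at hji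
    have hQeq : resMap a b (a-1) (b-1) (Nat.sub_le a 1) (Nat.sub_le b 1) (colFn a b A B j)
        = resMap a b (a-1) (b-1) (Nat.sub_le a 1) (Nat.sub_le b 1) (colFn a b A₂ B₂ j) := by
      rw [resMap_colFn, resMap_colFn]
      rcases Nat.eq_or_lt_of_le hji with rfl | hgt
      · funext r
        cases r with
        | inl p => exact hA _ (by have := p.isLt; omega)
        | inr p => exact hB _ (by have := p.isLt; omega)
      · have e1 : colFn (a-1) (b-1) A B j = shMap a b (colFn a b A B (j-1)) := by
          rw [shMap_colFn]; exact congrArg _ (by omega)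
        have e2 : colFn (a-1) (b-1) A₂ B₂ j = shMap a b (colFn a b A₂ B₂ (j-1)) := by
          rw [shMap_colFn]; exact congrArg _ (by omega)
        rw [e1, e2, IH (j-1) (by omega) (by omega)]
    have h1 : colFn a b A B j ∈ span (ZMod 2) (colFn a b A B '' {t | t < i}) := hsp j hjk
    have h2 : colFn a b A₂ B₂ j ∈ span (ZMod 2) (colFn a b A₂ B₂ '' {t | t < i}) := hsp₂ j hjk
    have himg : colFn a b A₂ B₂ '' {t | t < i} = colFn a b A B '' {t | t < i} :=
      Set.image_congr fun t ht => (IH t (by simp only [Set.mem_setOf_eq] at ht; omega)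
        (by simp only [Set.mem_setOf_eq] at ht; omega)).symm
    rw [himg] at h2
    have hVle : span (ZMod 2) (colFn a b A B '' {t | t < i})
        ≤ span (ZMod 2) (colFn a b A B '' {t | t < k}) :=
      span_mono (image_mono fun t ht => by simp only [Set.mem_setOf_eq] at ht ⊢; omega)
    exact hinj (colFn a b A B j) (subset_span ⟨j, hjk, rfl⟩) (colFn a b A₂ B₂ j) (hVle h2) hQeq
  constructor
  · intro t ht
    by_cases h : t < a+i-1
    · exact hA t h
    push_neg at h
    have hj : t - (a-1) < k := by omega
    have h2 := congrFun (hcol (t-(a-1)) hj) (Sum.inl (⟨a-1, by omega⟩ : Fin a))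
    have e : (a-1) + (t-(a-1)) = t := by omega
    calc A t = A ((a-1)+(t-(a-1))) := congrArg A e.symm
      _ = A₂ ((a-1)+(t-(a-1))) := h2
      _ = A₂ t := congrArg A₂ e
  · intro t ht
    by_cases h : t < b+i-1
    · exact hB t h
    push_neg at h
    have hj : t - (b-1) < k := by omega
    have h2 := congrFun (hcol (t-(b-1)) hj) (Sum.inr (⟨b-1, by omega⟩ : Fin b))
    have e : (b-1) + (t-(b-1)) = t := by omega
    calc B t = B ((b-1)+(t-(b-1))) := congrArg B e.symm
      _ = B₂ ((b-1)+(t-(b-1))) := h2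
      _ = B₂ t := congrArg B₂ e

end SP

namespace SP
set_option maxHeartbeats 1000000 in
theorem exists_ext (a b i k : ℕ) (A0 B0 : ℕ → ZMod 2) (ha : 1 ≤ a) (hb : 1 ≤ b)
    (hi : 1 ≤ i) (hk : i+1 ≤ k)
    (h1 : (seqMat (a-1) (b-1) i A0 B0).rank = i)
    (h2 : (seqMat (a-1) (b-1) (i+1) A0 B0).rank = i) :
    ∃ A B : ℕ → ZMod 2, (∀ t < a+i-1, A t = A0 t) ∧ (∀ t < b+i-1, B t = B0 t) ∧
      (seqMat (a-1) (b-1) k A B).rank = i ∧ (seqMat a b k A B).rank = i := by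
  have hli0 : LinearIndependent (ZMod 2) (fun l : Fin i => colFn (a-1) (b-1) A0 B0 l) := by
    rw [linearIndependent_iff_card_eq_finrank_span, Fintype.card_fin]
    show i = Module.finrank (ZMod 2)
      (span (ZMod 2) (Set.range fun l : Fin i => colFn (a-1) (b-1) A0 B0 l))
    rw [range_fin_eq_image, ← rank_seqMat]
    exact h1.symm
  have hWeq : span (ZMod 2) (colFn (a-1) (b-1) A0 B0 '' {t | t < i})
      = span (ZMod 2) (colFn (a-1) (b-1) A0 B0 '' {t | t < i+1}) := by
    apply Submodule.eq_of_le_of_finrank_le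
      (span_mono (image_mono fun t ht => by simp only [Set.mem_setOf_eq] at ht ⊢; omega))
    rw [← rank_seqMat, ← rank_seqMat, h1, h2]
  have hmem : colFn (a-1) (b-1) A0 B0 i
      ∈ span (ZMod 2) (Set.range fun l : Fin i => colFn (a-1) (b-1) A0 B0 l) := by
    rw [range_fin_eq_image, hWeq]
    exact subset_span ⟨i, by simp, rfl⟩
  obtain ⟨lam, hlam⟩ := (mem_span_range_iff_exists_fun (ZMod 2)).mp hmem
  have hbaseA : ∀ p, p + 1 < a → ∑ l : Fin i, lam l * A0 (p + l) = A0 (p + i) := by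
    intro p hp
    have h := congrFun hlam (Sum.inl (⟨p, by omega⟩ : Fin (a-1)))
    simp only [Finset.sum_apply, Pi.smul_apply, smul_eq_mul] at h
    exact h
  have hbaseB : ∀ p, p + 1 < b → ∑ l : Fin i, lam l * B0 (p + l) = B0 (p + i) := by
    intro p hp
    have h := congrFun hlam (Sum.inr (⟨p, by omega⟩ : Fin (b-1)))
    simp only [Finset.sum_apply, Pi.smul_apply, smul_eq_mul] at h
    exact h
  set lamN : ℕ → ZMod 2 := fun d => if h : d < i then lam ⟨d, h⟩ else 0 with hlamN
  set A : ℕ → ZMod 2 := recSeq (a+i-2) i lamN A0 with hA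
  set B : ℕ → ZMod 2 := recSeq (b+i-2) i lamN B0 with hB
  have hagrA : ∀ t < a+i-1, A t = A0 t := fun t ht => recSeq_le (by omega)
  have hagrB : ∀ t < b+i-1, B t = B0 t := fun t ht => recSeq_le (by omega)
  have hclaimA := seq_claim a i ha hi lam A0 hbaseA
  have hclaimB := seq_claim b i hb hi lam B0 hbaseB
  have hCC : ∀ j, i ≤ j →
      colFn a b A B j = ∑ l : Fin i, lam l • colFn a b A B (j - i + l) := by
    intro j hij
    funext r
    rw [Finset.sum_apply]
    cases r with
    | inl p =>
        show A ((p:ℕ) + j) = _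
        rw [hA, hclaimA j hij p p.isLt]
        apply Finset.sum_congr rfl
        intro l _
        rw [Pi.smul_apply, smul_eq_mul]
        rfl
    | inr p =>
        show B ((p:ℕ) + j) = _
        rw [hB, hclaimB j hij p p.isLt]
        apply Finset.sum_congr rfl
        intro l _
        rw [Pi.smul_apply, smul_eq_mul]
        rfl
  have hspan : ∀ j, colFn a b A B j ∈ span (ZMod 2) (colFn a b A B '' {t | t < i}) := by
    intro j
    induction j using Nat.strong_induction_on with
    | _ j IH =>
    by_cases hj : j < i
    · exact subset_span ⟨j, hj, rfl⟩
    · push_neg at hj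
      rw [hCC j hj]
      exact Submodule.sum_mem _ fun l _ =>
        Submodule.smul_mem _ _ (IH (j-i+l) (by have := l.isLt; omega))
  have hsmallagree : (fun l : Fin i => colFn (a-1) (b-1) A B l)
      = fun l : Fin i => colFn (a-1) (b-1) A0 B0 l := by
    funext l
    funext r
    cases r with
    | inl p =>
        show A ((p:ℕ) + l) = A0 ((p:ℕ) + l)
        exact hagrA _ (by have := p.isLt; have := l.isLt; omega)
    | inr p =>
        show B ((p:ℕ) + l) = B0 ((p:ℕ) + l)
        exact hagrB _ (by have := p.isLt; have := l.isLt; omega)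
  have hrb : (seqMat a b k A B).rank ≤ i := by
    rw [rank_seqMat]
    have hle : span (ZMod 2) (colFn a b A B '' {t | t < k})
        ≤ span (ZMod 2) (colFn a b A B '' {t | t < i}) := by
      refine span_le.mpr ?_
      rintro y ⟨t, ht, rfl⟩
      exact hspan t
    calc Module.finrank (ZMod 2) (span (ZMod 2) (colFn a b A B '' {t | t < k}))
        ≤ Module.finrank (ZMod 2) (span (ZMod 2) (colFn a b A B '' {t | t < i})) :=
          Submodule.finrank_mono hle
      _ = (seqMat a b i A B).rank := (rank_seqMat a b i A B).symm
      _ ≤ Fintype.card (Fin i) := Matrix.rank_le_card_width _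
      _ = i := Fintype.card_fin i
  have hli : LinearIndependent (ZMod 2) (fun l : Fin i => colFn (a-1) (b-1) A B l) := by
    rw [hsmallagree]; exact hli0
  have hrs : i ≤ (seqMat (a-1) (b-1) k A B).rank := by
    rw [rank_seqMat]
    have e1 : i = Module.finrank (ZMod 2)
        (span (ZMod 2) (Set.range fun l : Fin i => colFn (a-1) (b-1) A B l)) := by
      rw [finrank_span_eq_card hli, Fintype.card_fin]
    rw [e1]
    apply Submodule.finrank_mono
    rw [range_fin_eq_image]
    exact span_mono (image_mono fun t ht => by simp only [Set.mem_setOf_eq] at ht ⊢; omega)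
  have hmono := rank_seqMat_mono a b (a-1) (b-1) k (Nat.sub_le a 1) (Nat.sub_le b 1) A B
  exact ⟨A, B, hagrA, hagrB, by omega, by omega⟩
end SP

namespace SP
open Module

def fseq {n : ℕ} (γ : Fin n → ZMod 2) (t : ℕ) : ZMod 2 := if h : t < n then γ ⟨t, h⟩ else 0

lemma fseq_lt {n : ℕ} (γ : Fin n → ZMod 2) {t : ℕ} (h : t < n) : fseq γ t = γ ⟨t, h⟩ := dif_pos h

lemma seqMat_congr {a b k : ℕ} {A B A' B' : ℕ → ZMod 2}
    (hA : ∀ t < a + k - 1, A t = A' t) (hB : ∀ t < b + k - 1, B t = B' t) :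
    seqMat a b k A B = seqMat a b k A' B' := by
  ext r j
  cases r with
  | inl p => exact hA _ (by have := p.isLt; have := j.isLt; omega)
  | inr p => exact hB _ (by have := p.isLt; have := j.isLt; omega)

lemma fromRows_hankel (a b k : ℕ) (γ : Fin (a + k - 1) → ZMod 2) (δ : Fin (b + k - 1) → ZMod 2) :
    Matrix.fromRows (hankel a k γ) (hankel b k δ) = seqMat a b k (fseq γ) (fseq δ) := by
  ext r j
  cases r with
  | inl p =>
      show hankel a k γ p j = fseq γ _
      rw [fseq_lt (h := by have := p.isLt; have := j.isLt; omega)]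
      rfl
  | inr p =>
      show hankel b k δ p j = fseq δ _
      rw [fseq_lt (h := by have := p.isLt; have := j.isLt; omega)]
      rfl

def cut (N n : ℕ) (h : n ≤ N) (f : Fin N → ZMod 2) : Fin n → ZMod 2 :=
  fun t => f ⟨t, lt_of_lt_of_le t.isLt h⟩

def pad (N n : ℕ) (g : Fin n → ZMod 2) (x : ZMod 2) : Fin N → ZMod 2 :=
  fun t => if h : (t : ℕ) < n then g ⟨t, h⟩ else x

lemma cut_pad (N n : ℕ) (h : n ≤ N) (g : Fin n → ZMod 2) (x : ZMod 2) :
    cut N n h (pad N n g x) = g := by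
  funext t
  exact dif_pos t.isLt

lemma pad_cut (N n : ℕ) (h1 : N = n + 1) (f : Fin N → ZMod 2) :
    pad N n (cut N n (by omega) f) (f ⟨n, by omega⟩) = f := by
  funext t
  by_cases ht : (t : ℕ) < n
  · exact dif_pos ht
  · have e : pad N n (cut N n (by omega) f) (f ⟨n, by omega⟩) t = f ⟨n, by omega⟩ := dif_neg ht
    rw [e]
    exact congrArg f (Fin.ext (show n = (t:ℕ) by have := t.isLt; omega))

lemma fseq_cut {N n : ℕ} (h : n ≤ N) (f : Fin N → ZMod 2) {t : ℕ} (ht : t < n) :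
    fseq (cut N n h f) t = fseq f t := by
  rw [fseq_lt _ ht, fseq_lt _ (lt_of_lt_of_le ht h)]
  rfl

lemma fseq_ofSeq (C : ℕ → ZMod 2) (n : ℕ) {t : ℕ} (ht : t < n) :
    fseq (fun x : Fin n => C x) t = C t := by
  rw [fseq_lt _ ht]

def cutEquiv (N1 N2 n1 n2 : ℕ) (h1 : N1 = n1 + 1) (h2 : N2 = n2 + 1)
    (C : (Fin n1 → ZMod 2) → (Fin n2 → ZMod 2) → Prop) :
    {p : (Fin N1 → ZMod 2) × (Fin N2 → ZMod 2) //
        C (cut N1 n1 (by omega) p.1) (cut N2 n2 (by omega) p.2)} ≃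
      ({q : (Fin n1 → ZMod 2) × (Fin n2 → ZMod 2) // C q.1 q.2} × (ZMod 2 × ZMod 2)) where
  toFun p := (⟨(cut N1 n1 (by omega) p.val.1, cut N2 n2 (by omega) p.val.2), p.prop⟩,
              (p.val.1 ⟨n1, by omega⟩, p.val.2 ⟨n2, by omega⟩))
  invFun q := ⟨(pad N1 n1 q.1.val.1 q.2.1, pad N2 n2 q.1.val.2 q.2.2), by
      have e1 : cut N1 n1 (by omega : n1 ≤ N1) (pad N1 n1 q.1.val.1 q.2.1) = q.1.val.1 :=
        cut_pad N1 n1 (by omega) q.1.val.1 q.2.1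
      have e2 : cut N2 n2 (by omega : n2 ≤ N2) (pad N2 n2 q.1.val.2 q.2.2) = q.1.val.2 :=
        cut_pad N2 n2 (by omega) q.1.val.2 q.2.2
      rw [e1, e2]
      exact q.1.prop⟩
  left_inv p := by
    apply Subtype.ext
    apply Prod.ext
    · exact pad_cut N1 n1 h1 p.val.1
    · exact pad_cut N2 n2 h2 p.val.2
  right_inv q := by
    apply Prod.ext
    · apply Subtype.ext
      apply Prod.ext
      · exact cut_pad N1 n1 (by omega) _ _
      · exact cut_pad N2 n2 (by omega) _ _
    · apply Prod.ext
      · exact dif_neg (lt_irrefl n1)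
      · exact dif_neg (lt_irrefl n2)

def cutEquiv' (N1 N2 n1 n2 : ℕ) (h1 : N1 = n1) (h2 : N2 = n2)
    (C : (Fin n1 → ZMod 2) → (Fin n2 → ZMod 2) → Prop) :
    {p : (Fin N1 → ZMod 2) × (Fin N2 → ZMod 2) //
        C (cut N1 n1 (by omega) p.1) (cut N2 n2 (by omega) p.2)} ≃
      {q : (Fin n1 → ZMod 2) × (Fin n2 → ZMod 2) // C q.1 q.2} := by
  subst h1
  subst h2
  exact Equiv.subtypeEquivRight fun p => Iff.rfl

lemma rank_seqMat_mono_cols (a b k' k : ℕ) (hk : k' ≤ k) (A B : ℕ → ZMod 2) :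
    (seqMat a b k' A B).rank ≤ (seqMat a b k A B).rank := by
  rw [rank_seqMat, rank_seqMat]
  exact Submodule.finrank_mono
    (span_mono (image_mono fun t ht => by simp only [Set.mem_setOf_eq] at ht ⊢; omega))

lemma rank_seqMat_le_width (a b k : ℕ) (A B : ℕ → ZMod 2) :
    (seqMat a b k A B).rank ≤ k := by
  calc (seqMat a b k A B).rank ≤ Fintype.card (Fin k) := Matrix.rank_le_card_width _
    _ = k := Fintype.card_fin k

lemma rank_full_sub (a b i : ℕ) (A B : ℕ → ZMod 2)
    (h : (seqMat a b (i+1) A B).rank = i + 1) : (seqMat a b i A B).rank = i := by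
  have hli : LinearIndependent (ZMod 2) (fun j : Fin (i+1) => colFn a b A B j) := by
    rw [linearIndependent_iff_card_eq_finrank_span, Fintype.card_fin]
    show i + 1 = Module.finrank (ZMod 2)
      (span (ZMod 2) (Set.range fun j : Fin (i+1) => colFn a b A B j))
    rw [range_fin_eq_image, ← rank_seqMat]
    exact h.symm
  have hli' : LinearIndependent (ZMod 2) (fun l : Fin i => colFn a b A B l) :=
    hli.comp (Fin.castLE (Nat.le_succ i)) (Fin.castLE_injective _)
  rw [rank_seqMat, ← range_fin_eq_image, finrank_span_eq_card hli', Fintype.card_fin]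

lemma subRank_eq (s m k a' b' k' : ℕ) (α : Fin (s + k - 1) → ZMod 2)
    (β : Fin (s + m + k - 1) → ZMod 2) :
    subRank s m k a' b' k' α β = (seqMat a' b' k' (fseq α) (fseq β)).rank := by
  have e : subMat s m k a' b' k' α β = seqMat a' b' k' (fseq α) (fseq β) := by
    ext r j
    cases r with
    | inl p => rfl
    | inr p => rfl
  rw [subRank, e]

end SP

namespace SP
set_option maxHeartbeats 1000000 in
theorem stepA (s m k i : ℕ) (hs : 2 ≤ s) (hi1 : 1 ≤ i) (hk : i + 1 ≤ k) :
    Nat.card {p : (Fin (s + k - 1) → ZMod 2) × (Fin (s + m + k - 1) → ZMod 2) //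
        subRank s m k (s - 1) (s + m - 1) k p.1 p.2 = i ∧
        subRank s m k s (s + m - 1) k p.1 p.2 = i ∧
        subRank s m k s (s + m) k p.1 p.2 = i} =
    Nat.card {p : (Fin (s + i - 1) → ZMod 2) × (Fin (s + m + i - 1) → ZMod 2) //
        (seqMat (s-1) (s+m-1) i (fseq p.1) (fseq p.2)).rank = i ∧
        (seqMat (s-1) (s+m-1) (i+1) (fseq p.1) (fseq p.2)).rank = i} := by
  have hc1 : s + i - 1 ≤ s + k - 1 := by omega
  have hc2 : s + m + i - 1 ≤ s + m + k - 1 := by omega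
  set f : {p : (Fin (s + k - 1) → ZMod 2) × (Fin (s + m + k - 1) → ZMod 2) //
        subRank s m k (s - 1) (s + m - 1) k p.1 p.2 = i ∧
        subRank s m k s (s + m - 1) k p.1 p.2 = i ∧
        subRank s m k s (s + m) k p.1 p.2 = i} →
      {p : (Fin (s + i - 1) → ZMod 2) × (Fin (s + m + i - 1) → ZMod 2) //
        (seqMat (s-1) (s+m-1) i (fseq p.1) (fseq p.2)).rank = i ∧
        (seqMat (s-1) (s+m-1) (i+1) (fseq p.1) (fseq p.2)).rank = i} :=
    fun p => ⟨(cut _ _ hc1 p.val.1, cut _ _ hc2 p.val.2), by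
      obtain ⟨c1, c2, c3⟩ := p.prop
      rw [subRank_eq] at c1 c3
      obtain ⟨_, r1, r2⟩ := main_struct s (s+m) i k (fseq p.val.1) (fseq p.val.2) hi1 hk c1 c3
      have e1 : seqMat (s-1) (s+m-1) i (fseq (cut _ _ hc1 p.val.1)) (fseq (cut _ _ hc2 p.val.2))
          = seqMat (s-1) (s+m-1) i (fseq p.val.1) (fseq p.val.2) :=
        seqMat_congr (fun t ht => fseq_cut hc1 _ (by omega)) (fun t ht => fseq_cut hc2 _ (by omega))
      have e2 : seqMat (s-1) (s+m-1) (i+1) (fseq (cut _ _ hc1 p.val.1)) (fseq (cut _ _ hc2 p.val.2))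
          = seqMat (s-1) (s+m-1) (i+1) (fseq p.val.1) (fseq p.val.2) :=
        seqMat_congr (fun t ht => fseq_cut hc1 _ (by omega)) (fun t ht => fseq_cut hc2 _ (by omega))
      rw [e1, e2]
      exact ⟨r1, r2⟩⟩ with hf
  have hinj : Function.Injective f := by
    intro p q hpq
    obtain ⟨c1, c2, c3⟩ := p.prop
    rw [subRank_eq] at c1 c3
    obtain ⟨d1, d2, d3⟩ := q.prop
    rw [subRank_eq] at d1 d3
    have hv1 : cut _ _ hc1 p.val.1 = cut _ _ hc1 q.val.1 := congrArg (fun x => x.val.1) hpq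
    have hv2 : cut _ _ hc2 p.val.2 = cut _ _ hc2 q.val.2 := congrArg (fun x => x.val.2) hpq
    have hagr1 : ∀ t < s + i - 1, fseq p.val.1 t = fseq q.val.1 t := by
      intro t ht
      rw [fseq_lt _ (by omega : t < s + k - 1), fseq_lt _ (by omega : t < s + k - 1)]
      exact congrFun hv1 ⟨t, ht⟩
    have hagr2 : ∀ t < s + m + i - 1, fseq p.val.2 t = fseq q.val.2 t := by
      intro t ht
      rw [fseq_lt _ (by omega : t < s + m + k - 1), fseq_lt _ (by omega : t < s + m + k - 1)]
      exact congrFun hv2 ⟨t, ht⟩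
    obtain ⟨u1, u2⟩ := uniq_ext s (s+m) i k (fseq p.val.1) (fseq p.val.2)
      (fseq q.val.1) (fseq q.val.2) (by omega) (by omega) hi1 hk c1 c3 d1 d3 hagr1 hagr2
    apply Subtype.ext
    apply Prod.ext
    · funext t
      calc p.val.1 t = fseq p.val.1 t := (fseq_lt _ t.isLt).symm
        _ = fseq q.val.1 t := u1 t t.isLt
        _ = q.val.1 t := fseq_lt _ t.isLt
    · funext t
      calc p.val.2 t = fseq p.val.2 t := (fseq_lt _ t.isLt).symm
        _ = fseq q.val.2 t := u2 t t.isLt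
        _ = q.val.2 t := fseq_lt _ t.isLt
  have hsurj : Function.Surjective f := by
    intro q
    obtain ⟨A, B, hagA, hagB, r1, r2⟩ := exists_ext s (s+m) i k (fseq q.val.1) (fseq q.val.2)
      (by omega) (by omega) hi1 hk q.prop.1 q.prop.2
    have hα : ∀ t < s + k - 1, fseq (fun x : Fin (s + k - 1) => A x) t = A t :=
      fun t ht => fseq_ofSeq A _ ht
    have hβ : ∀ t < s + m + k - 1, fseq (fun x : Fin (s + m + k - 1) => B x) t = B t :=
      fun t ht => fseq_ofSeq B _ ht
    have eQ : seqMat (s-1) (s+m-1) k (fseq (fun x : Fin (s + k - 1) => A x))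
        (fseq (fun x : Fin (s + m + k - 1) => B x)) = seqMat (s-1) (s+m-1) k A B :=
      seqMat_congr (fun t ht => hα t (by omega)) (fun t ht => hβ t (by omega))
    have eD : seqMat s (s+m) k (fseq (fun x : Fin (s + k - 1) => A x))
        (fseq (fun x : Fin (s + m + k - 1) => B x)) = seqMat s (s+m) k A B :=
      seqMat_congr (fun t ht => hα t (by omega)) (fun t ht => hβ t (by omega))
    have cond1 : subRank s m k (s-1) (s+m-1) k (fun x : Fin (s + k - 1) => A x)
        (fun x : Fin (s + m + k - 1) => B x) = i := by
      rw [subRank_eq, eQ]; exact r1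
    have cond3 : subRank s m k s (s+m) k (fun x : Fin (s + k - 1) => A x)
        (fun x : Fin (s + m + k - 1) => B x) = i := by
      rw [subRank_eq, eD]; exact r2
    have cond2 : subRank s m k s (s+m-1) k (fun x : Fin (s + k - 1) => A x)
        (fun x : Fin (s + m + k - 1) => B x) = i := by
      rw [subRank_eq]
      have m1 := rank_seqMat_mono s (s+m-1) (s-1) (s+m-1) k (Nat.sub_le s 1) le_rfl
        (fseq (fun x : Fin (s + k - 1) => A x)) (fseq (fun x : Fin (s + m + k - 1) => B x))
      have m2 := rank_seqMat_mono s (s+m) s (s+m-1) k le_rfl (Nat.sub_le (s+m) 1)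
        (fseq (fun x : Fin (s + k - 1) => A x)) (fseq (fun x : Fin (s + m + k - 1) => B x))
      rw [eQ] at m1
      rw [eD] at m2
      omega
    refine ⟨⟨(fun x : Fin (s + k - 1) => A x, fun x : Fin (s + m + k - 1) => B x),
      cond1, cond2, cond3⟩, ?_⟩
    apply Subtype.ext
    apply Prod.ext
    · funext t
      show A (t : ℕ) = q.val.1 t
      calc A (t : ℕ) = fseq q.val.1 t := hagA t t.isLt
        _ = q.val.1 t := fseq_lt _ t.isLt
    · funext t
      show B (t : ℕ) = q.val.2 t
      calc B (t : ℕ) = fseq q.val.2 t := hagB t t.isLt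
        _ = q.val.2 t := fseq_lt _ t.isLt
  exact Nat.card_congr (Equiv.ofBijective f ⟨hinj, hsurj⟩)
end SP

namespace SP

lemma card_partition {α : Type*} [Finite α] (C D : α → Prop) :
    Nat.card {x // C x} = Nat.card {x // C x ∧ D x} + Nat.card {x // C x ∧ ¬ D x} := by
  classical
  have e1 : {x // C x} ≃ {y : {x // C x} // D y.val} ⊕ {y : {x // C x} // ¬ D y.val} :=
    (Equiv.sumCompl _).symm
  rw [Nat.card_congr e1, Nat.card_sum]
  congr 1
  · exact Nat.card_congr (Equiv.subtypeSubtypeEquivSubtypeInter C D)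
  · exact Nat.card_congr (Equiv.subtypeSubtypeEquivSubtypeInter C (fun x => ¬ D x))

lemma gammaCard (s m i : ℕ) :
    Nat.card {q : (Fin (s - 1 + i - 1) → ZMod 2) × (Fin (s + m - 1 + i - 1) → ZMod 2) //
        (seqMat (s-1) (s+m-1) i (fseq q.1) (fseq q.2)).rank = i} = Gamma (s-1) (s+m-1) i i := by
  rw [Gamma]
  exact Nat.card_congr (Equiv.subtypeEquivRight (fun q => by rw [fromRows_hankel]))

set_option maxHeartbeats 1000000 in
lemma stepB1 (s m i : ℕ) (hs : 2 ≤ s) (hi1 : 1 ≤ i) :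
    Nat.card {p : (Fin (s + i - 1) → ZMod 2) × (Fin (s + m + i - 1) → ZMod 2) //
        (seqMat (s-1) (s+m-1) i (fseq p.1) (fseq p.2)).rank = i} =
      4 * Gamma (s-1) (s+m-1) i i := by
  have h1 : s + i - 1 = (s - 1 + i - 1) + 1 := by omega
  have h2 : s + m + i - 1 = (s + m - 1 + i - 1) + 1 := by omega
  have e0 : ∀ p : (Fin (s + i - 1) → ZMod 2) × (Fin (s + m + i - 1) → ZMod 2),
      (seqMat (s-1) (s+m-1) i (fseq p.1) (fseq p.2)).rank = i ↔
      (seqMat (s-1) (s+m-1) i (fseq (cut _ (s - 1 + i - 1) (by omega) p.1))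
        (fseq (cut _ (s + m - 1 + i - 1) (by omega) p.2))).rank = i := by
    intro p
    have e : seqMat (s-1) (s+m-1) i (fseq (cut _ (s - 1 + i - 1) (by omega) p.1))
        (fseq (cut _ (s + m - 1 + i - 1) (by omega) p.2))
        = seqMat (s-1) (s+m-1) i (fseq p.1) (fseq p.2) :=
      seqMat_congr (fun t ht => fseq_cut _ _ (by omega)) (fun t ht => fseq_cut _ _ (by omega))
    rw [e]
  calc Nat.card {p : (Fin (s + i - 1) → ZMod 2) × (Fin (s + m + i - 1) → ZMod 2) //
        (seqMat (s-1) (s+m-1) i (fseq p.1) (fseq p.2)).rank = i}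
      = Nat.card {p : (Fin (s + i - 1) → ZMod 2) × (Fin (s + m + i - 1) → ZMod 2) //
        (seqMat (s-1) (s+m-1) i (fseq (cut _ (s - 1 + i - 1) (by omega) p.1))
          (fseq (cut _ (s + m - 1 + i - 1) (by omega) p.2))).rank = i} :=
        Nat.card_congr (Equiv.subtypeEquivRight e0)
    _ = Nat.card ({q : (Fin (s - 1 + i - 1) → ZMod 2) × (Fin (s + m - 1 + i - 1) → ZMod 2) //
          (seqMat (s-1) (s+m-1) i (fseq q.1) (fseq q.2)).rank = i} × (ZMod 2 × ZMod 2)) :=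
        Nat.card_congr (cutEquiv (s + i - 1) (s + m + i - 1) (s - 1 + i - 1) (s + m - 1 + i - 1)
          h1 h2 (fun g1 g2 => (seqMat (s-1) (s+m-1) i (fseq g1) (fseq g2)).rank = i))
    _ = Nat.card {q : (Fin (s - 1 + i - 1) → ZMod 2) × (Fin (s + m - 1 + i - 1) → ZMod 2) //
          (seqMat (s-1) (s+m-1) i (fseq q.1) (fseq q.2)).rank = i}
          * (Nat.card (ZMod 2) * Nat.card (ZMod 2)) := by
        rw [Nat.card_prod, Nat.card_prod]
    _ = 4 * Gamma (s-1) (s+m-1) i i := by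
        rw [Nat.card_zmod, gammaCard]
        ring

set_option maxHeartbeats 1000000 in
lemma stepB2 (s m i : ℕ) (hs : 2 ≤ s) (hi1 : 1 ≤ i) :
    Nat.card {p : (Fin (s + i - 1) → ZMod 2) × (Fin (s + m + i - 1) → ZMod 2) //
        (seqMat (s-1) (s+m-1) i (fseq p.1) (fseq p.2)).rank = i} =
    Nat.card {p : (Fin (s + i - 1) → ZMod 2) × (Fin (s + m + i - 1) → ZMod 2) //
        (seqMat (s-1) (s+m-1) i (fseq p.1) (fseq p.2)).rank = i ∧
        (seqMat (s-1) (s+m-1) (i+1) (fseq p.1) (fseq p.2)).rank = i} +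
      Gamma (s-1) (s+m-1) (i+1) (i+1) := by
  rw [card_partition (fun p : (Fin (s + i - 1) → ZMod 2) × (Fin (s + m + i - 1) → ZMod 2) =>
    (seqMat (s-1) (s+m-1) i (fseq p.1) (fseq p.2)).rank = i)
    (fun p => (seqMat (s-1) (s+m-1) (i+1) (fseq p.1) (fseq p.2)).rank = i)]
  congr 1
  have hiff : ∀ p : (Fin (s + i - 1) → ZMod 2) × (Fin (s + m + i - 1) → ZMod 2),
      ((seqMat (s-1) (s+m-1) i (fseq p.1) (fseq p.2)).rank = i ∧
        ¬ (seqMat (s-1) (s+m-1) (i+1) (fseq p.1) (fseq p.2)).rank = i) ↔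
      (seqMat (s-1) (s+m-1) (i+1) (fseq p.1) (fseq p.2)).rank = i + 1 := by
    intro p
    constructor
    · rintro ⟨hc, hd⟩
      have hle := rank_seqMat_le_width (s-1) (s+m-1) (i+1) (fseq p.1) (fseq p.2)
      have hmono := rank_seqMat_mono_cols (s-1) (s+m-1) i (i+1) (by omega) (fseq p.1) (fseq p.2)
      omega
    · intro h
      have hsub := rank_full_sub (s-1) (s+m-1) i _ _ h
      exact ⟨hsub, by omega⟩
  rw [Nat.card_congr (Equiv.subtypeEquivRight hiff)]
  have h1 : s + i - 1 = s - 1 + (i+1) - 1 := by omega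
  have h2 : s + m + i - 1 = s + m - 1 + (i+1) - 1 := by omega
  have e0 : ∀ p : (Fin (s + i - 1) → ZMod 2) × (Fin (s + m + i - 1) → ZMod 2),
      (seqMat (s-1) (s+m-1) (i+1) (fseq p.1) (fseq p.2)).rank = i + 1 ↔
      (seqMat (s-1) (s+m-1) (i+1) (fseq (cut _ (s - 1 + (i+1) - 1) (by omega) p.1))
        (fseq (cut _ (s + m - 1 + (i+1) - 1) (by omega) p.2))).rank = i + 1 := by
    intro p
    have e : seqMat (s-1) (s+m-1) (i+1) (fseq (cut _ (s - 1 + (i+1) - 1) (by omega) p.1))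
        (fseq (cut _ (s + m - 1 + (i+1) - 1) (by omega) p.2))
        = seqMat (s-1) (s+m-1) (i+1) (fseq p.1) (fseq p.2) :=
      seqMat_congr (fun t ht => fseq_cut _ _ (by omega)) (fun t ht => fseq_cut _ _ (by omega))
    rw [e]
  rw [Nat.card_congr (Equiv.subtypeEquivRight e0),
    Nat.card_congr (cutEquiv' (s + i - 1) (s + m + i - 1) (s - 1 + (i+1) - 1)
      (s + m - 1 + (i+1) - 1) h1 h2
      (fun g1 g2 => (seqMat (s-1) (s+m-1) (i+1) (fseq g1) (fseq g2)).rank = i + 1))]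
  rw [Gamma]
  exact Nat.card_congr (Equiv.subtypeEquivRight (fun q => by rw [fromRows_hankel]))

end SP

theorem sigma_eq_Gamma_combination (s m k i : ℕ) (hs : 2 ≤ s) (hi1 : 1 ≤ i)
    (hi2 : i ≤ 2 * s + m - 3) (hk : i + 1 ≤ k) :
    (Nat.card {p : (Fin (s + k - 1) → ZMod 2) × (Fin (s + m + k - 1) → ZMod 2) //
        subRank s m k (s - 1) (s + m - 1) k p.1 p.2 = i ∧
        subRank s m k s (s + m - 1) k p.1 p.2 = i ∧
        subRank s m k s (s + m) k p.1 p.2 = i} : ℤ) =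
      4 * Gamma (s - 1) (s + m - 1) i i - Gamma (s - 1) (s + m - 1) (i + 1) (i + 1) := by
  have hA := SP.stepA s m k i hs hi1 hk
  have hB1 := SP.stepB1 s m i hs hi1
  have hB2 := SP.stepB2 s m i hs hi1
  rw [hA]
  omega
end

section
/- Let s ≥ 2, m ≥ 0, k ≥ 1 and 2 ≤ i ≤ min(2s+m, k). With σ_j(s,m,k) denoting the number of pairs (α,β) ∈ F_2^{s+k−1} × F_2^{s+m+k−1} such that rank M(s−1, s+m−1, k) = rank M(s, s+m−1, k) = rank M(s, s+m, k) = j, the following recurrence holds in ℤ: Γ_i^{[s,s+m]×k} = 2·Γ_{i−1}^{[s−1, s+m]×k} + 4·Γ_{i−1}^{[s, s+m−1]×k} − 8·Γ_{i−2}^{[s−1, s+m−1]×k} + σ_i(s,m,k) − 3·σ_{i−1}(s,m,k) + 2·σ_{i−2}(s,m,k). -/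
open Matrix

/-- `σ_j(s,m,k)` : the number of pairs `(α, β)` such that the three nested submatrices
`M(s-1, s+m-1, k)`, `M(s, s+m-1, k)` and `M(s, s+m, k)` all have rank `j`. -/
noncomputable def sigma3 (s m k j : ℕ) : ℕ :=
  Nat.card {p : (Fin (s + k - 1) → ZMod 2) × (Fin (s + m + k - 1) → ZMod 2) //
    subRank s m k (s - 1) (s + m - 1) k p.1 p.2 = j ∧
    subRank s m k s (s + m - 1) k p.1 p.2 = j ∧
    subRank s m k s (s + m) k p.1 p.2 = j}

/-!
For a pair `(α, β)` let `W` be the row space of `M(s-1, s+m-1, k)`, `u` the last row of the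
`α`-block of `M(s, ·, k)` and `v` the last row of the `β`-block of `M(·, s+m, k)`. The ranks
`r₁, r₂, r₃, r₄` of `M(s-1, s+m-1)`, `M(s, s+m-1)`, `M(s-1, s+m)`, `M(s, s+m)` are the dimensions
of `W`, `W + ⟨u⟩`, `W + ⟨v⟩`, `W + ⟨u, v⟩`. Over `F_2` these, together with
`r₂' = dim (W + ⟨u + v⟩)`, follow one of five patterns, and in each of them
`[r₄ = i] - [r₃ = i-1] - [r₂ = i-1] - [r₂' = i-1] + 2 [r₁ = i-2]` equals the `σ`-part
`[σ_i] - 3 [σ_{i-1}] + 2 [σ_{i-2}]` of the recurrence. Summing over all pairs gives the theorem: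
the entries of `α, β` not seen by a submatrix are free, which produces the factors `2, 2, 4`
in front of the `Γ`'s, and the shear `(α, β) ↦ (α + β shifted by m, β)` is a bijection fixing
`W` and sending `u` to `u + v`, so `r₂'` and `r₂` take each value equally often.
-/

open Module Submodule

namespace DoubleHankel

theorem natCast_natCard_subtype_eq_sum_ite {R P : Type*} [AddCommMonoidWithOne R] [Fintype P]
    (Q : P → Prop) [DecidablePred Q] :
    (Nat.card {p // Q p} : R) = ∑ p, if Q p then 1 else 0 := by
  rw [Nat.card_eq_fintype_card, Fintype.card_subtype, Finset.natCast_card_filter]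

theorem natCard_restrict_prod {X : Type*} {n₁ n₂ n₁' n₂' : ℕ} (h₁ : n₁' ≤ n₁) (h₂ : n₂' ≤ n₂)
    (P : (Fin n₁' → X) × (Fin n₂' → X) → Prop) :
    Nat.card {p : (Fin n₁ → X) × (Fin n₂ → X) // P (p.1 ∘ Fin.castLE h₁, p.2 ∘ Fin.castLE h₂)}
      = Nat.card X ^ (n₁ - n₁' + (n₂ - n₂')) * Nat.card {q // P q} := by
  have split {n n' : ℕ} (h : n' ≤ n) :
      ∃ e : (Fin n → X) ≃ (Fin n' → X) × (Fin (n - n') → X), ∀ f, (e f).1 = f ∘ Fin.castLE h :=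
    ⟨(Equiv.arrowCongr (finCongr (by omega)) (Equiv.refl X)).trans (Fin.appendEquiv _ _).symm,
      fun f => rfl⟩
  obtain ⟨e₁, he₁⟩ := split h₁
  obtain ⟨e₂, he₂⟩ := split h₂
  let E := (e₁.prodCongr e₂).trans (Equiv.prodProdProdComm _ _ _ _)
  calc _ = Nat.card {q : _ × ((Fin (n₁ - n₁') → X) × (Fin (n₂ - n₂') → X)) // P q.1} :=
        Nat.card_congr (E.subtypeEquiv fun p => by simp [E, he₁, he₂])
    _ = _ := by
      rw [Nat.card_congr Equiv.prodSubtypeFstEquivSubtypeProd, Nat.card_prod, Nat.card_prod,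
        Nat.card_fun, Nat.card_fun, Nat.card_fin, Nat.card_fin, pow_add, mul_comm]

/-- The possible values of `(dim W, dim (W + ⟨u⟩), dim (W + ⟨u + v⟩), dim (W + ⟨v⟩),
dim (W + ⟨u, v⟩))` over `F_2`. -/
def IsRankProfile (r₁ r₂ r₂' r₃ r₄ : ℕ) : Prop :=
  r₂ = r₁ ∧ r₂' = r₁ ∧ r₃ = r₁ ∧ r₄ = r₁ ∨
  r₂ = r₁ + 1 ∧ r₂' = r₁ + 1 ∧ r₃ = r₁ ∧ r₄ = r₁ + 1 ∨
  r₂ = r₁ ∧ r₂' = r₁ + 1 ∧ r₃ = r₁ + 1 ∧ r₄ = r₁ + 1 ∨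
  r₂ = r₁ + 1 ∧ r₂' = r₁ ∧ r₃ = r₁ + 1 ∧ r₄ = r₁ + 1 ∨
  r₂ = r₁ + 1 ∧ r₂' = r₁ + 1 ∧ r₃ = r₁ + 1 ∧ r₄ = r₁ + 2

theorem ite_identity_of_isRankProfile {i r₁ r₂ r₂' r₃ r₄ : ℕ} (hi : 2 ≤ i)
    (h : IsRankProfile r₁ r₂ r₂' r₃ r₄) :
    ((if r₄ = i then 1 else 0) - (if r₃ = i - 1 then 1 else 0) - (if r₂ = i - 1 then 1 else 0)
        - (if r₂' = i - 1 then 1 else 0) + 2 * (if r₁ = i - 2 then 1 else 0) : ℤ)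
      = (if r₁ = i ∧ r₂ = i ∧ r₄ = i then 1 else 0)
        - 3 * (if r₁ = i - 1 ∧ r₂ = i - 1 ∧ r₄ = i - 1 then 1 else 0)
        + 2 * (if r₁ = i - 2 ∧ r₂ = i - 2 ∧ r₄ = i - 2 then 1 else 0) := by
  rcases h with ⟨rfl, rfl, rfl, rfl⟩ | ⟨rfl, rfl, rfl, rfl⟩ | ⟨rfl, rfl, rfl, rfl⟩ |
    ⟨rfl, rfl, rfl, rfl⟩ | ⟨rfl, rfl, rfl, rfl⟩ <;> split_ifs <;> omega

theorem sup_span_singleton_add_of_mem {R M : Type*} [Ring R] [AddCommGroup M] [Module R M]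
    {W : Submodule R M} {v : M} (hv : v ∈ W) (u : M) :
    W ⊔ span R {u + v} = W ⊔ span R {u} := by
  apply le_antisymm <;> refine sup_le le_sup_left ((span_singleton_le_iff_mem _ _).2 ?_)
  · exact add_mem (mem_sup_right (mem_span_singleton_self u)) (mem_sup_left hv)
  · simpa using sub_mem (mem_sup_right (mem_span_singleton_self (u + v))) (mem_sup_left hv)

section ZModTwo

variable {V : Type*} [AddCommGroup V] [Module (ZMod 2) V]

theorem add_self_eq_zero_of_zmod_two (v : V) : v + v = 0 := by
  rw [← two_smul (ZMod 2), show (2 : ZMod 2) = 0 from rfl, zero_smul]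

theorem mem_sup_span_singleton_iff {W : Submodule (ZMod 2) V} {u v : V} :
    u ∈ W ⊔ span (ZMod 2) {v} ↔ u ∈ W ∨ u + v ∈ W := by
  constructor
  · intro hu
    obtain ⟨w, hw, _, hc, rfl⟩ := mem_sup.1 hu
    obtain ⟨c, rfl⟩ := mem_span_singleton.1 hc
    rcases (by decide : ∀ c : ZMod 2, c = 0 ∨ c = 1) c with rfl | rfl
    · left; simpa using hw
    · right; simpa [add_assoc, add_self_eq_zero_of_zmod_two] using hw
  · rintro (hu | huv)
    · exact mem_sup_left hu
    · simpa [add_assoc, add_self_eq_zero_of_zmod_two] using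
        add_mem (mem_sup_left huv) (mem_sup_right (mem_span_singleton_self v))

variable [FiniteDimensional (ZMod 2) V]

theorem isRankProfile_finrank (W : Submodule (ZMod 2) V) (u v : V) :
    IsRankProfile (finrank (ZMod 2) W) (finrank (ZMod 2) ↥(W ⊔ span (ZMod 2) {u}))
      (finrank (ZMod 2) ↥(W ⊔ span (ZMod 2) {u + v})) (finrank (ZMod 2) ↥(W ⊔ span (ZMod 2) {v}))
      (finrank (ZMod 2) ↥(W ⊔ span (ZMod 2) {v} ⊔ span (ZMod 2) {u})) := by
  have sup_of_mem {x : V} {U : Submodule (ZMod 2) V} (hx : x ∈ U) : U ⊔ span (ZMod 2) {x} = U :=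
    sup_eq_left.2 ((span_singleton_le_iff_mem x U).2 hx)
  by_cases hv : v ∈ W
  · rw [sup_span_singleton_add_of_mem hv, sup_of_mem hv]
    by_cases hu : u ∈ W
    · rw [sup_of_mem hu]; left; simp
    · rw [finrank_sup_span_singleton hu]; right; left; simp
  · have hWv := finrank_sup_span_singleton hv
    by_cases hWvu : u ∈ W ⊔ span (ZMod 2) {v}
    · rw [sup_of_mem hWvu, hWv]
      rcases mem_sup_span_singleton_iff.1 hWvu with hu | huv
      · have huv : u + v ∉ W := fun h => hv ((W.add_mem_iff_right hu).1 h)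
        rw [sup_of_mem hu, finrank_sup_span_singleton huv]
        right; right; left; simp
      · have hu : u ∉ W := fun h => hv ((W.add_mem_iff_right h).1 huv)
        rw [sup_of_mem huv, finrank_sup_span_singleton hu]
        right; right; right; left; simp
    · have hu : u ∉ W := fun h => hWvu (mem_sup_left h)
      have huv : u + v ∉ W := fun h => hWvu (mem_sup_span_singleton_iff.2 (Or.inr h))
      rw [finrank_sup_span_singleton hWvu, hWv, finrank_sup_span_singleton hu,
        finrank_sup_span_singleton huv]
      right; right; right; right; simp

end ZModTwo

section Rows

variable {R : Type*} [Ring R] (k : ℕ)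

def hankelRow {n : ℕ} (γ : Fin n → R) (i : ℕ) : Fin k → R :=
  fun j => if h : i + j < n then γ ⟨i + j, h⟩ else 0

def rowSpan {n₁ n₂ : ℕ} (a b : ℕ) (α : Fin n₁ → R) (β : Fin n₂ → R) : Submodule R (Fin k → R) :=
  span R (hankelRow k α '' Set.Iio a ∪ hankelRow k β '' Set.Iio b)

variable {k} {n₁ n₂ : ℕ}

theorem rowSpan_succ_left (a b : ℕ) (α : Fin n₁ → R) (β : Fin n₂ → R) :
    rowSpan k (a + 1) b α β = rowSpan k a b α β ⊔ span R {hankelRow k α a} := by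
  rw [rowSpan, rowSpan, ← Order.succ_eq_add_one, Order.Iio_succ_eq_insert, Set.image_insert_eq,
    Set.insert_union, span_insert, sup_comm]

theorem rowSpan_succ_right (a b : ℕ) (α : Fin n₁ → R) (β : Fin n₂ → R) :
    rowSpan k a (b + 1) α β = rowSpan k a b α β ⊔ span R {hankelRow k β b} := by
  rw [rowSpan, rowSpan, ← Order.succ_eq_add_one, Order.Iio_succ_eq_insert, Set.image_insert_eq,
    Set.union_insert, span_insert, sup_comm]

def shiftLeft (m : ℕ) (h : n₁ + m = n₂) (γ : Fin n₂ → R) : Fin n₁ → R :=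
  fun x => γ ⟨x + m, by omega⟩

theorem hankelRow_add_shiftLeft {m : ℕ} (h : n₁ + m = n₂) (α : Fin n₁ → R) (β : Fin n₂ → R)
    (i : ℕ) :
    hankelRow k (α + shiftLeft m h β) i = hankelRow k α i + hankelRow k β (i + m) := by
  funext j
  by_cases hj : i + j < n₁
  · simp [hankelRow, shiftLeft, hj, show i + m + j < n₂ by omega, Nat.add_right_comm]
  · simp [hankelRow, hj, show ¬ i + m + j < n₂ by omega]

theorem rowSpan_add_shiftLeft {m : ℕ} (h : n₁ + m = n₂) {a b : ℕ} (hab : a + m ≤ b)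
    (α : Fin n₁ → R) (β : Fin n₂ → R) :
    rowSpan k a b (α + shiftLeft m h β) β = rowSpan k a b α β := by
  have hβ {γ : Fin n₁ → R} {i : ℕ} (hi : i < a) : hankelRow k β (i + m) ∈ rowSpan k a b γ β :=
    subset_span (Or.inr ⟨i + m, by simp only [Set.mem_Iio]; omega, rfl⟩)
  apply le_antisymm <;> rw [rowSpan, span_le] <;> rintro _ (⟨i, hi, rfl⟩ | ⟨i, hi, rfl⟩)
  · rw [hankelRow_add_shiftLeft]
    exact add_mem (subset_span (Or.inl ⟨i, hi, rfl⟩)) (hβ hi)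
  · exact subset_span (Or.inr ⟨i, hi, rfl⟩)
  · rw [← add_sub_cancel_right (hankelRow k α i) (hankelRow k β (i + m)),
      ← hankelRow_add_shiftLeft h]
    exact sub_mem (subset_span (Or.inl ⟨i, hi, rfl⟩)) (hβ hi)
  · exact subset_span (Or.inr ⟨i, hi, rfl⟩)

def shear (m : ℕ) (h : n₁ + m = n₂) :
    (Fin n₁ → R) × (Fin n₂ → R) ≃ (Fin n₁ → R) × (Fin n₂ → R) where
  toFun p := (p.1 + shiftLeft m h p.2, p.2)
  invFun p := (p.1 - shiftLeft m h p.2, p.2)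
  left_inv p := by simp
  right_inv p := by simp

end Rows

theorem subRank_eq_finrank_rowSpan (s m k a b : ℕ) (α : Fin (s + k - 1) → ZMod 2)
    (β : Fin (s + m + k - 1) → ZMod 2) :
    subRank s m k a b k α β = finrank (ZMod 2) (rowSpan k a b α β) := by
  have hrange (n : ℕ) (γ : Fin n → ZMod 2) (c : ℕ) :
      Set.range (fun i : Fin c => hankelRow k γ i) = hankelRow k γ '' Set.Iio c := by
    ext; simp [Fin.exists_iff]
  have hrows : (subMat s m k a b k α β).row
      = Sum.elim (fun i : Fin a => hankelRow k α i) (fun i : Fin b => hankelRow k β i) := by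
    funext r
    cases r <;> rfl
  rw [subRank, rank_eq_finrank_span_row, rowSpan, hrows, Set.Sum.elim_range, hrange, hrange]

theorem subMat_eq_fromRows {s m k a b : ℕ} (ha : a ≤ s) (hb : b ≤ s + m)
    (α : Fin (s + k - 1) → ZMod 2) (β : Fin (s + m + k - 1) → ZMod 2) :
    subMat s m k a b k α β = fromRows (hankel a k (α ∘ Fin.castLE (by omega)))
      (hankel b k (β ∘ Fin.castLE (by omega))) := by
  ext (r | r) j <;> simp only [subMat, hankel, of_apply, fromRows_apply_inl, fromRows_apply_inr,
    Sum.elim_inl, Sum.elim_inr, Function.comp_apply] <;> exact dif_pos (by omega)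

theorem natCard_subRank_eq {s m k : ℕ} (hk : 1 ≤ k) {a b : ℕ} (ha : a ≤ s)
    (hb : b ≤ s + m) (j : ℕ) :
    Nat.card {p : (Fin (s + k - 1) → ZMod 2) × (Fin (s + m + k - 1) → ZMod 2) //
        subRank s m k a b k p.1 p.2 = j} = 2 ^ (s - a + (s + m - b)) * Gamma a b k j := by
  simp only [subRank, subMat_eq_fromRows ha hb]
  rw [natCard_restrict_prod (P := fun q => (fromRows (hankel a k q.1) (hankel b k q.2)).rank = j),
    Nat.card_zmod, show s + k - 1 - (a + k - 1) + (s + m + k - 1 - (b + k - 1))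
      = s - a + (s + m - b) by omega]
  rfl

theorem isRankProfile_subRank {s m k : ℕ} (hs : 1 ≤ s) (hn : s + k - 1 + m = s + m + k - 1)
    (p : (Fin (s + k - 1) → ZMod 2) × (Fin (s + m + k - 1) → ZMod 2)) :
    IsRankProfile (subRank s m k (s - 1) (s + m - 1) k p.1 p.2)
      (subRank s m k s (s + m - 1) k p.1 p.2)
      (subRank s m k s (s + m - 1) k (shear m hn p).1 (shear m hn p).2)
      (subRank s m k (s - 1) (s + m) k p.1 p.2) (subRank s m k s (s + m) k p.1 p.2) := by
  obtain ⟨α, β⟩ := p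
  have hleft {n₁ n₂ : ℕ} (b : ℕ) (γ : Fin n₁ → ZMod 2) (δ : Fin n₂ → ZMod 2) :
      rowSpan k s b γ δ = rowSpan k (s - 1) b γ δ ⊔ span (ZMod 2) {hankelRow k γ (s - 1)} := by
    rw [← rowSpan_succ_left, Nat.sub_add_cancel hs]
  have hright : rowSpan k (s - 1) (s + m) α β
      = rowSpan k (s - 1) (s + m - 1) α β ⊔ span (ZMod 2) {hankelRow k β (s + m - 1)} := by
    rw [← rowSpan_succ_right, Nat.sub_add_cancel (by omega)]
  have hsheared : rowSpan k s (s + m - 1) (α + shiftLeft m hn β) β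
      = rowSpan k (s - 1) (s + m - 1) α β
        ⊔ span (ZMod 2) {hankelRow k α (s - 1) + hankelRow k β (s + m - 1)} := by
    rw [hleft, rowSpan_add_shiftLeft hn (by omega), hankelRow_add_shiftLeft,
      show s - 1 + m = s + m - 1 by omega]
  change IsRankProfile _ _ (subRank s m k s (s + m - 1) k (α + shiftLeft m hn β) β) _ _
  simp only [subRank_eq_finrank_rowSpan]
  rw [hsheared, hleft, hleft, hright]
  exact isRankProfile_finrank _ _ _

end DoubleHankel

open DoubleHankel in
theorem Gamma_recurrence_general (s m k i : ℕ) (hs : 2 ≤ s) (hk : 1 ≤ k) (hi1 : 2 ≤ i) :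
    (Gamma s (s + m) k i : ℤ) =
      2 * Gamma (s - 1) (s + m) k (i - 1) + 4 * Gamma s (s + m - 1) k (i - 1)
        - 8 * Gamma (s - 1) (s + m - 1) k (i - 2)
        + sigma3 s m k i - 3 * sigma3 s m k (i - 1) + 2 * sigma3 s m k (i - 2) := by
  have hn : s + k - 1 + m = s + m + k - 1 := by omega
  have hsum := Fintype.sum_congr _ _ fun p =>
    ite_identity_of_isRankProfile hi1 (isRankProfile_subRank (by omega) hn p)
  simp only [Finset.sum_add_distrib, Finset.sum_sub_distrib, ← Finset.mul_sum,
    Equiv.sum_comp (shear m hn) fun p =>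
      if subRank s m k s (s + m - 1) k p.1 p.2 = i - 1 then (1 : ℤ) else 0,
    ← natCast_natCard_subtype_eq_sum_ite] at hsum
  rw [natCard_subRank_eq hk le_rfl le_rfl, natCard_subRank_eq hk (Nat.sub_le s 1) le_rfl,
    natCard_subRank_eq hk le_rfl (Nat.sub_le _ 1),
    natCard_subRank_eq hk (Nat.sub_le s 1) (Nat.sub_le _ 1), Nat.sub_self, Nat.sub_self,
    show s - (s - 1) = 1 by omega, show s + m - (s + m - 1) = 1 by omega] at hsum
  unfold sigma3
  push_cast at hsum
  linarith

/-- the recurrent formula for `Γ_i^{[s,s+m]×k}`. -/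
theorem Gamma_recurrence (s m k i : ℕ) (hs : 2 ≤ s) (hk : 1 ≤ k) (hi1 : 2 ≤ i)
    (hi2 : i ≤ min (2 * s + m) k) :
    (Gamma s (s + m) k i : ℤ) =
      2 * Gamma (s - 1) (s + m) k (i - 1) + 4 * Gamma s (s + m - 1) k (i - 1)
        - 8 * Gamma (s - 1) (s + m - 1) k (i - 2)
        + sigma3 s m k i - 3 * sigma3 s m k (i - 1) + 2 * sigma3 s m k (i - 2) :=
  Gamma_recurrence_general s m k i hs hk hi1
end

section
/- Let s ≥ 2, m ≥ 0, k ≥ 1 and q ≥ 2. Let R_q(k,s,m) be the number of 3q-tuples of polynomials (Y_1,Z_1,U_1,…,Y_q,Z_q,U_q) over F_2 with deg Y_i ≤ k−1, deg Z_i ≤ s−1, deg U_i ≤ s+m−1 for all i (the zero polynomial is allowed), satisfying Y_1Z_1 + ⋯ + Y_qZ_q = 0 and Y_1U_1 + ⋯ + Y_qU_q = 0 in F_2[T]. Then 2^k · R_q(k,s,m) = 4 · Σ_{i=0}^{min(2s+m,k)} Γ_i^{[s,s+m]×k} · 2^{(2s+m+k)(q−1) − q·i}, where every exponent (2s+m+k)(q−1)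 − q·i appearing in the sum is nonnegative. -/
open Matrix

/-- `R_q(k,s,m)` : the number of `3q`-tuples of polynomials `(Y_i, Z_i, U_i)` over `F_2` with
`deg Y_i ≤ k-1`, `deg Z_i ≤ s-1`, `deg U_i ≤ s+m-1` (the zero polynomial being allowed),
satisfying `Σ Y_i Z_i = 0` and `Σ Y_i U_i = 0` in `F_2[T]`. -/
noncomputable def Rq (q k s m : ℕ) : ℕ :=
  Nat.card {f : Fin q → Polynomial (ZMod 2) × Polynomial (ZMod 2) × Polynomial (ZMod 2) //
    (∀ i, (f i).1.degree < (k : WithBot ℕ) ∧ (f i).2.1.degree < (s : WithBot ℕ) ∧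
      (f i).2.2.degree < ((s + m : ℕ) : WithBot ℕ)) ∧
    (∑ i, (f i).1 * (f i).2.1 = 0) ∧ (∑ i, (f i).1 * (f i).2.2 = 0)}

/-!
For fixed `Y = (Y_1, …, Y_q)` the conditions on `Z` and on `U` are independent. The map
`Z ↦ ∑ Y_i Z_i` is linear from `F_2^{qs}` to the polynomials of degree `< s + k - 1`, and its
transpose sends `α` to `(H_s(α) y_i)_i`, where `H_s(α)` is the `s × k` Hankel matrix and `y_i` the
coefficient vector of `Y_i`. As a matrix and its transpose have the same rank, the number of `Z`
is `2^{qs - (s+k-1)}` times the number of `α` with `H_s(α) y_i = 0` for all `i`, and likewise for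
`U` and `β`. Exchanging the sum over `Y` with the sum over `(α, β)`, the number of `Y` killed by the
stacked matrix `D(α, β)` is `2^{q (k - rank D)}`; grouping the pairs by rank gives the `Γ_i`.
-/

open Polynomial

section Counting

variable {α β γ : Type*}

theorem Nat.card_subtype_prod_and (P : α → Prop) (Q : β → Prop) :
    Nat.card {p : α × β // P p.1 ∧ Q p.2} = Nat.card {a // P a} * Nat.card {b // Q b} := by
  rw [Nat.card_congr Equiv.subtypeProdEquivProd, Nat.card_prod]

theorem Nat.card_subtype_prod_eq_sum [Fintype α] [Finite β] (R : α → β → Prop) :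
    Nat.card {p : α × β // R p.1 p.2} = ∑ a, Nat.card {b // R a b} := by
  rw [Nat.card_congr (Equiv.subtypeProdEquivSigmaSubtype R), Nat.card_sigma]

theorem Nat.sum_card_subtype_comm [Fintype α] [Fintype β] (R : α → β → Prop) :
    ∑ a, Nat.card {b // R a b} = ∑ b, Nat.card {a // R a b} := by
  rw [← Nat.card_subtype_prod_eq_sum, ← Nat.card_subtype_prod_eq_sum (fun b a => R a b)]
  exact Nat.card_congr ((Equiv.prodComm α β).subtypeEquiv fun _ => Iff.rfl)

theorem Nat.card_subtype_prod_prod_and [Fintype α] [Finite β] [Finite γ]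
    (P : α → β → Prop) (Q : α → γ → Prop) :
    Nat.card {v : α × β × γ // P v.1 v.2.1 ∧ Q v.1 v.2.2}
      = ∑ a, Nat.card {b // P a b} * Nat.card {c // Q a c} := by
  simp only [Nat.card_subtype_prod_eq_sum (fun a (v : β × γ) => P a v.1 ∧ Q a v.2),
    Nat.card_subtype_prod_and]

end Counting

section Kernels

variable {K : Type*} [Field K] {κ ι : Type*} [Fintype ι]

theorem Matrix.natCard_mulVec_eq_zero (M : Matrix κ ι K) :
    Nat.card {x // M *ᵥ x = 0} = Nat.card K ^ (Fintype.card ι - M.rank) := by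
  have hker : Nat.card {x // M *ᵥ x = 0} = Nat.card (LinearMap.ker M.mulVecLin) := rfl
  have := LinearMap.finrank_range_add_finrank_ker M.mulVecLin
  rw [Module.finrank_fintype_fun_eq_card] at this
  rw [hker, Module.natCard_eq_pow_finrank (K := K), Matrix.rank]
  congr 1
  omega

theorem Matrix.natCard_mulVec_eq_zero_mul_pow [Fintype κ] (M : Matrix κ ι K) :
    Nat.card {x // M *ᵥ x = 0} * Nat.card K ^ Fintype.card κ
      = Nat.card {x // Mᵀ *ᵥ x = 0} * Nat.card K ^ Fintype.card ι := by
  have hι := M.rank_le_card_width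
  have hκ := M.rank_le_card_height
  rw [natCard_mulVec_eq_zero, natCard_mulVec_eq_zero, rank_transpose, ← pow_add, ← pow_add]
  congr 1
  omega

theorem Matrix.natCard_forall_mulVec_eq_zero (M : Matrix κ ι K) (q : ℕ) :
    Nat.card {y : Fin q → ι → K // ∀ i, M *ᵥ y i = 0}
      = Nat.card K ^ (q * (Fintype.card ι - M.rank)) := by
  rw [Nat.card_congr (Equiv.subtypePiEquivPi (p := fun _ x => M *ᵥ x = 0)), Nat.card_pi,
    natCard_mulVec_eq_zero, Finset.prod_const, Finset.card_univ, Fintype.card_fin, ← pow_mul,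
    mul_comm]

end Kernels

namespace Polynomial

variable {R : Type*} [CommSemiring R] [DecidableEq R]

theorem ofFn_toFn_of_degree_lt {n : ℕ} {p : R[X]} (h : p.degree < n) :
    ofFn n (toFn n p) = p := by
  ext i
  by_cases hi : i < n
  · simp [hi, toFn]
  · rw [ofFn_coeff_eq_zero_of_ge _ (not_lt.1 hi),
      coeff_eq_zero_of_degree_lt (h.trans_le (by exact_mod_cast not_lt.1 hi))]

theorem ofFn_eq_sum_C_mul_X_pow {n : ℕ} (v : Fin n → R) :
    ofFn n v = ∑ j : Fin n, C (v j) * X ^ (j : ℕ) := by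
  simp only [ofFn_eq_sum_monomial, C_mul_X_pow_eq_monomial]

theorem coeff_ofFn_mul_ofFn_of_le {k t n : ℕ} (y : Fin k → R) (z : Fin t → R)
    (hn : t + k - 1 ≤ n) : (ofFn k y * ofFn t z).coeff n = 0 := by
  rw [coeff_mul]
  refine Finset.sum_eq_zero fun ab hab => ?_
  rw [Finset.HasAntidiagonal.mem_antidiagonal] at hab
  by_cases ha : ab.1 < k
  · rw [ofFn_coeff_eq_zero_of_ge z (by omega), mul_zero]
  · rw [ofFn_coeff_eq_zero_of_ge y (not_lt.1 ha), zero_mul]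

noncomputable def mulMatrix (k t q : ℕ) (y : Fin q → Fin k → R) :
    Matrix (Fin (t + k - 1)) (Fin q × Fin t) R :=
  Matrix.of fun n p => (ofFn k (y p.1) * X ^ (p.2 : ℕ)).coeff n

theorem mulMatrix_mulVec_apply {k t q : ℕ} (y : Fin q → Fin k → R) (z : Fin q → Fin t → R)
    (n : Fin (t + k - 1)) :
    (mulMatrix k t q y *ᵥ Function.uncurry z) n = (∑ i, ofFn k (y i) * ofFn t (z i)).coeff n := by
  simp only [mulVec, dotProduct, Fintype.sum_prod_type, mulMatrix, of_apply,
    Function.uncurry_apply_pair, ofFn_eq_sum_C_mul_X_pow (n := t), Finset.mul_sum, finsetSum_coeff]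
  refine Finset.sum_congr rfl fun i _ => Finset.sum_congr rfl fun b _ => ?_
  rw [mul_left_comm, coeff_C_mul, mul_comm]

theorem sum_ofFn_mul_ofFn_eq_zero_iff {k t q : ℕ} (y : Fin q → Fin k → R)
    (z : Fin q → Fin t → R) :
    ∑ i, ofFn k (y i) * ofFn t (z i) = 0 ↔ mulMatrix k t q y *ᵥ Function.uncurry z = 0 := by
  simp only [funext_iff, mulMatrix_mulVec_apply, Pi.zero_apply, Polynomial.ext_iff, coeff_zero]
  refine ⟨fun h n => h n, fun h n => ?_⟩
  by_cases hn : n < t + k - 1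
  · exact h ⟨n, hn⟩
  · rw [finsetSum_coeff]
    exact Finset.sum_eq_zero fun i _ => coeff_ofFn_mul_ofFn_of_le _ _ (not_lt.1 hn)

end Polynomial

theorem hankel_mulVec_apply {t k : ℕ} (α : Fin (t + k - 1) → ZMod 2) (y : Fin k → ZMod 2)
    (b : Fin t) : (hankel t k α *ᵥ y) b = ∑ n, α n * (ofFn k y * X ^ (b : ℕ)).coeff n := by
  simp only [mulVec, dotProduct, hankel, of_apply, ofFn_eq_sum_C_mul_X_pow, Finset.sum_mul,
    finsetSum_coeff, Finset.mul_sum]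
  rw [Finset.sum_comm]
  refine Finset.sum_congr rfl fun j _ => ?_
  have hj : (b : ℕ) + j < t + k - 1 := by omega
  rw [Finset.sum_eq_single ⟨b + j, hj⟩]
  · rw [mul_assoc, ← pow_add, coeff_C_mul_X_pow, if_pos (by simp [add_comm]), mul_comm]
  · intro n _ hn
    rw [mul_assoc, ← pow_add, coeff_C_mul_X_pow, if_neg, mul_zero]
    exact fun h => hn (Fin.ext (by simp [h, add_comm]))
  · simp

theorem mulMatrix_transpose_mulVec {k t q : ℕ} (y : Fin q → Fin k → ZMod 2)
    (α : Fin (t + k - 1) → ZMod 2) :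
    (mulMatrix k t q y)ᵀ *ᵥ α = fun p => (hankel t k α *ᵥ y p.1) p.2 := by
  ext p
  rw [mulVec_transpose, hankel_mulVec_apply]
  rfl

theorem natCard_sum_ofFn_mul_eq_zero_mul_pow (k t q : ℕ) (y : Fin q → Fin k → ZMod 2) :
    Nat.card {z : Fin q → Fin t → ZMod 2 // ∑ i, ofFn k (y i) * ofFn t (z i) = 0} *
        2 ^ (t + k - 1)
      = Nat.card {α : Fin (t + k - 1) → ZMod 2 // ∀ i, hankel t k α *ᵥ y i = 0} *
        2 ^ (q * t) := by
  have hz : Nat.card {z : Fin q → Fin t → ZMod 2 // ∑ i, ofFn k (y i) * ofFn t (z i) = 0}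
      = Nat.card {x // mulMatrix k t q y *ᵥ x = 0} :=
    Nat.card_congr <|
      (Equiv.curry _ _ _).symm.subtypeEquiv fun z => sum_ofFn_mul_ofFn_eq_zero_iff y z
  have hα : Nat.card {α : Fin (t + k - 1) → ZMod 2 // ∀ i, hankel t k α *ᵥ y i = 0}
      = Nat.card {α // (mulMatrix k t q y)ᵀ *ᵥ α = 0} :=
    Nat.card_congr <| Equiv.subtypeEquivRight fun α => by
      simp only [mulMatrix_transpose_mulVec, funext_iff, Prod.forall, Pi.zero_apply]
  rw [hz, hα]
  simpa [Nat.card_zmod] using (mulMatrix k t q y).natCard_mulVec_eq_zero_mul_pow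

theorem Rq_eq_natCard_coeffs (q k s m : ℕ) :
    Rq q k s m = Nat.card {v : (Fin q → Fin k → ZMod 2) × (Fin q → Fin s → ZMod 2) ×
        (Fin q → Fin (s + m) → ZMod 2) //
      (∑ i, ofFn k (v.1 i) * ofFn s (v.2.1 i) = 0) ∧
        ∑ i, ofFn k (v.1 i) * ofFn (s + m) (v.2.2 i) = 0} := by
  symm
  refine Nat.card_eq_of_bijective
    (fun v => ⟨fun i => (ofFn k (v.1.1 i), ofFn s (v.1.2.1 i), ofFn (s + m) (v.1.2.2 i)),
      fun i => ⟨ofFn_degree_lt _, ofFn_degree_lt _, ofFn_degree_lt _⟩, v.2⟩) ⟨?_, ?_⟩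
  · rintro ⟨⟨y, z, u⟩, _⟩ ⟨⟨y', z', u'⟩, _⟩ h
    simp only [Subtype.mk.injEq, funext_iff, Prod.mk.injEq] at h
    have inj {n : ℕ} := injective_ofFn (R := ZMod 2) n
    simp only [Subtype.mk.injEq, Prod.mk.injEq]
    exact ⟨funext fun i => inj (h i).1, funext fun i => inj (h i).2.1,
      funext fun i => inj (h i).2.2⟩
  · rintro ⟨f, hdeg, hY⟩
    refine ⟨⟨(fun i => toFn k (f i).1, fun i => toFn s (f i).2.1, fun i => toFn _ (f i).2.2), ?_⟩,
      ?_⟩ <;>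
      simp only [ofFn_toFn_of_degree_lt (hdeg _).1, ofFn_toFn_of_degree_lt (hdeg _).2.1,
        ofFn_toFn_of_degree_lt (hdeg _).2.2]
    exact hY

theorem natCard_forall_hankel_mulVec_mul {a b k q : ℕ} (y : Fin q → Fin k → ZMod 2) :
    Nat.card {α : Fin (a + k - 1) → ZMod 2 // ∀ i, hankel a k α *ᵥ y i = 0} *
        Nat.card {β : Fin (b + k - 1) → ZMod 2 // ∀ i, hankel b k β *ᵥ y i = 0}
      = Nat.card {p : (Fin (a + k - 1) → ZMod 2) × (Fin (b + k - 1) → ZMod 2) //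
          ∀ i, fromRows (hankel a k p.1) (hankel b k p.2) *ᵥ y i = 0} := by
  rw [← Nat.card_subtype_prod_and]
  exact Nat.card_congr <| Equiv.subtypeEquivRight fun p => by
    simp only [fromRows_mulVec, funext_iff, Sum.forall, Sum.elim_inl, Sum.elim_inr, Pi.zero_apply,
      forall_and]

theorem natCard_mul_natCard_sum_ofFn_mul_eq_zero_mul_pow (k s m q : ℕ)
    (y : Fin q → Fin k → ZMod 2) :
    Nat.card {z : Fin q → Fin s → ZMod 2 // ∑ i, ofFn k (y i) * ofFn s (z i) = 0} *
        Nat.card {u : Fin q → Fin (s + m) → ZMod 2 //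
          ∑ i, ofFn k (y i) * ofFn (s + m) (u i) = 0} *
        (2 ^ (s + k - 1) * 2 ^ (s + m + k - 1))
      = Nat.card {p : (Fin (s + k - 1) → ZMod 2) × (Fin (s + m + k - 1) → ZMod 2) //
          ∀ i, fromRows (hankel s k p.1) (hankel (s + m) k p.2) *ᵥ y i = 0} *
        (2 ^ (q * s) * 2 ^ (q * (s + m))) := by
  rw [mul_mul_mul_comm, natCard_sum_ofFn_mul_eq_zero_mul_pow,
    natCard_sum_ofFn_mul_eq_zero_mul_pow, mul_mul_mul_comm, natCard_forall_hankel_mulVec_mul]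

theorem Rq_mul_pow_eq_sum_rank (q k s m : ℕ) :
    Rq q k s m * (2 ^ (s + k - 1) * 2 ^ (s + m + k - 1))
      = (∑ p : (Fin (s + k - 1) → ZMod 2) × (Fin (s + m + k - 1) → ZMod 2),
          2 ^ (q * (k - (fromRows (hankel s k p.1) (hankel (s + m) k p.2)).rank))) *
        (2 ^ (q * s) * 2 ^ (q * (s + m))) := by
  rw [Rq_eq_natCard_coeffs, Nat.card_subtype_prod_prod_and
    (fun (y : Fin q → Fin k → ZMod 2) (z : Fin q → Fin s → ZMod 2) =>
      ∑ i, ofFn k (y i) * ofFn s (z i) = 0)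
    (fun y (u : Fin q → Fin (s + m) → ZMod 2) => ∑ i, ofFn k (y i) * ofFn (s + m) (u i) = 0),
    Finset.sum_mul]
  simp_rw [natCard_mul_natCard_sum_ofFn_mul_eq_zero_mul_pow]
  rw [← Finset.sum_mul, Nat.sum_card_subtype_comm]
  simp_rw [natCard_forall_mulVec_eq_zero, Nat.card_zmod, Fintype.card_fin]

theorem sum_rank_eq_sum_Gamma (a b k : ℕ) (f : ℕ → ℕ) :
    ∑ p : (Fin (a + k - 1) → ZMod 2) × (Fin (b + k - 1) → ZMod 2),
        f (fromRows (hankel a k p.1) (hankel b k p.2)).rank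
      = ∑ i ∈ Finset.range (min (a + b) k + 1), Gamma a b k i * f i := by
  classical
  have hrank (p : (Fin (a + k - 1) → ZMod 2) × (Fin (b + k - 1) → ZMod 2)) :
      (fromRows (hankel a k p.1) (hankel b k p.2)).rank ∈ Finset.range (min (a + b) k + 1) := by
    have hh := (fromRows (hankel a k p.1) (hankel b k p.2)).rank_le_card_height
    have hw := (fromRows (hankel a k p.1) (hankel b k p.2)).rank_le_card_width
    simp only [Fintype.card_sum, Fintype.card_fin] at hh hw
    rw [Finset.mem_range]
    omega
  rw [← Finset.sum_fiberwise_of_maps_to fun p _ => hrank p]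
  refine Finset.sum_congr rfl fun i _ => ?_
  rw [Finset.sum_congr rfl fun p hp => by rw [(Finset.mem_filter.1 hp).2], Finset.sum_const,
    smul_eq_mul, Gamma, Nat.card_eq_fintype_card, Fintype.card_subtype]

theorem Nat.mul_le_add_mul_sub_one {q i a b : ℕ} (hq : 2 ≤ q) (ha : i ≤ a) (hb : i ≤ b) :
    q * i ≤ (a + b) * (q - 1) := by
  obtain ⟨r, rfl⟩ : ∃ r, q = r + 2 := ⟨q - 2, by omega⟩
  rw [show r + 2 - 1 = r + 1 by omega]
  nlinarith

theorem Rq_eq_sum_Gamma_general (s m k q : ℕ) (hk : 1 ≤ k) (hq : 2 ≤ q) :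
    2 ^ k * Rq q k s m =
      4 * ∑ i ∈ Finset.range (min (2 * s + m) k + 1),
        Gamma s (s + m) k i * 2 ^ ((2 * s + m + k) * (q - 1) - q * i) ∧
    ∀ i ∈ Finset.range (min (2 * s + m) k + 1), q * i ≤ (2 * s + m + k) * (q - 1) := by
  have hexp : ∀ i ∈ Finset.range (min (2 * s + m) k + 1), q * i ≤ (2 * s + m + k) * (q - 1) :=
    fun i hi => have := Finset.mem_range.1 hi; Nat.mul_le_add_mul_sub_one hq (by omega) (by omega)
  refine ⟨?_, hexp⟩
  apply Nat.eq_of_mul_eq_mul_right (by positivity : 0 < 2 ^ (s + k - 1) * 2 ^ (s + m + k - 1))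
  rw [mul_assoc, Rq_mul_pow_eq_sum_rank, sum_rank_eq_sum_Gamma _ _ _ fun r => 2 ^ (q * (k - r)),
    show s + (s + m) = 2 * s + m by ring, Finset.sum_mul, Finset.mul_sum, Finset.mul_sum,
    Finset.sum_mul]
  refine Finset.sum_congr rfl fun i hi => ?_
  have hik : i ≤ k := by have := Finset.mem_range.1 hi; omega
  have hE : k + q * (k - i) + (q * s + q * (s + m))
      = 2 + ((2 * s + m + k) * (q - 1) - q * i) + (s + k - 1 + (s + m + k - 1)) := by
    zify [hik, hexp i hi, (by omega : 1 ≤ q), (by omega : 1 ≤ s + k), (by omega : 1 ≤ s + m + k)]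
    ring
  calc 2 ^ k * (Gamma s (s + m) k i * 2 ^ (q * (k - i)) * (2 ^ (q * s) * 2 ^ (q * (s + m))))
      = Gamma s (s + m) k i * 2 ^ (k + q * (k - i) + (q * s + q * (s + m))) := by ring
    _ = 4 * (Gamma s (s + m) k i * 2 ^ ((2 * s + m + k) * (q - 1) - q * i)) *
          (2 ^ (s + k - 1) * 2 ^ (s + m + k - 1)) := by rw [hE]; ring

theorem Rq_eq_sum_Gamma (s m k q : ℕ) (hs : 2 ≤ s) (hk : 1 ≤ k) (hq : 2 ≤ q) :
    2 ^ k * Rq q k s m =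
      4 * ∑ i ∈ Finset.range (min (2 * s + m) k + 1),
        Gamma s (s + m) k i * 2 ^ ((2 * s + m + k) * (q - 1) - q * i) ∧
    ∀ i ∈ Finset.range (min (2 * s + m) k + 1), q * i ≤ (2 * s + m + k) * (q - 1) :=
  Rq_eq_sum_Gamma_general s m k q hk hq
end
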